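/- arXiv:2003.06836 — 6 statements merged into one kernel-verified Lean document; each statement's English description precedes it below -/
import Mathlib

section
/- The number of weights of the form w·ω_k (w in the Weyl group of type B_n, ω_k = e_1+...+e_k) that are conjugate to 0 under the dot action (i.e. w·ω_k + ρ lies in the W-orbit of ρ) equals binomial(n - k/2, k/2) if k is even, and binomial(n - (k-1)/2 - 1, (k-1)/2) if k is odd. -/
/-!
The orbit `W·ω_k` consists of the vectors `μ` with entries in `{-1, 0, 1}` and exactly `k`
nonzero entries. As `W` acts by signed permutations and `ρ_j = n - j - 1/2 > 0`, the vector
`μ + ρ` lies in `W·ρ` iff `|μ_i + ρ_i| = ρ_{τ i}` for some permutation `τ`, and then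
`τ i ∈ {i - 1, i, i + 1}`. A permutation of `{0, …, n-1}` moving no point by more than one is a
product of disjoint adjacent transpositions `(a a+1)`, so `μ` has `-1` at `a` and `1` at `a + 1`
for each of them and vanishes elsewhere, except for a possible unpaired `-1` in the last
coordinate (where `|-1 + ρ_{n-1}| = 1/2 = ρ_{n-1}`). Counting nonzero entries, these `μ`
correspond to the `⌊k/2⌋`-subsets of `{0, …, n - 2 - (k mod 2)}` without two consecutive
elements, and there are `C(N + 1 - m, m)` such `m`-subsets of `{0, …, N - 1}`.
-/

/-- The action of the type-B Weyl group element (σ, ε) (a permutation together with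
sign changes) on a vector in ℚⁿ. -/
def signAct {n : ℕ} (σ : Equiv.Perm (Fin n)) (ε : Fin n → ℚ) (v : Fin n → ℚ) : Fin n → ℚ :=
  fun i => ε i * v (σ⁻¹ i)

/-- ε is a choice of signs. -/
def IsSign {n : ℕ} (ε : Fin n → ℚ) : Prop := ∀ i, ε i = 1 ∨ ε i = -1

open Finset

def NoConsecutive (A : Finset ℕ) : Prop := ∀ a ∈ A, a + 1 ∉ A

instance : DecidablePred NoConsecutive :=
  fun A => inferInstanceAs (Decidable (∀ a ∈ A, a + 1 ∉ A))

def sparseSets (N m : ℕ) : Finset (Finset ℕ) :=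
  {A ∈ (range N).powersetCard m | NoConsecutive A}

lemma mem_sparseSets {N m : ℕ} {A : Finset ℕ} :
    A ∈ sparseSets N m ↔ A ⊆ range N ∧ #A = m ∧ NoConsecutive A := by
  simp [sparseSets, mem_powersetCard, and_assoc]

lemma sparseSets_zero (N : ℕ) : sparseSets N 0 = {∅} := by
  ext A
  rw [mem_sparseSets, card_eq_zero, mem_singleton]
  constructor
  · exact fun h => h.2.1
  · rintro rfl
    simp [NoConsecutive]

lemma filter_sparseSets_add_two_notMem (N m : ℕ) :
    {A ∈ sparseSets (N + 2) m | N + 1 ∉ A} = sparseSets (N + 1) m := by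
  ext A
  simp only [mem_filter, mem_sparseSets, subset_iff, mem_range]
  constructor
  · rintro ⟨⟨hA, hcard, hsp⟩, hN⟩
    exact ⟨fun a ha => by have := hA ha; grind, hcard, hsp⟩
  · rintro ⟨hA, hcard, hsp⟩
    exact ⟨⟨fun a ha => by have := hA ha; omega, hcard, hsp⟩,
      fun h => by have := hA h; omega⟩

lemma card_filter_sparseSets_add_two_mem (N m : ℕ) :
    #{A ∈ sparseSets (N + 2) (m + 1) | N + 1 ∈ A} = #(sparseSets N m) := by
  refine card_nbij' (·.erase (N + 1)) (insert (N + 1)) ?_ ?_ ?_ ?_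
  · intro A hA
    simp only [mem_coe, mem_filter, mem_sparseSets, subset_iff, mem_range] at hA ⊢
    obtain ⟨⟨hA, hcard, hsp⟩, hN⟩ := hA
    refine ⟨fun a ha => ?_, by rw [card_erase_of_mem hN, hcard]; rfl,
      fun a ha ha' => hsp a (mem_of_mem_erase ha) (mem_of_mem_erase ha')⟩
    obtain ⟨hne, ha⟩ := mem_erase.mp ha
    have := hA ha
    have : a ≠ N := fun h => hsp a ha (h ▸ hN)
    omega
  · intro B hB
    simp only [mem_coe, mem_filter, mem_sparseSets, subset_iff, mem_range] at hB ⊢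
    obtain ⟨hB, hcard, hsp⟩ := hB
    have hN : N + 1 ∉ B := fun h => by have := hB h; omega
    refine ⟨⟨fun a ha => ?_, by rw [card_insert_of_notMem hN, hcard], fun a ha ha' => ?_⟩,
      mem_insert_self _ _⟩
    · rcases mem_insert.mp ha with rfl | ha
      · omega
      · have := hB ha; omega
    · rcases mem_insert.mp ha with rfl | ha <;> rcases mem_insert.mp ha' with h | h
      · omega
      · have := hB h; omega
      · have := hB ha; omega
      · exact hsp a ha h
  · intro A hA
    exact insert_erase (mem_filter.mp hA).2
  · intro B hB
    simp only [mem_coe, mem_sparseSets, subset_iff, mem_range] at hB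
    exact erase_insert fun h => by have := hB.1 h; omega

lemma card_sparseSets_add_two (N m : ℕ) :
    #(sparseSets (N + 2) (m + 1)) = #(sparseSets (N + 1) (m + 1)) + #(sparseSets N m) := by
  rw [← card_filter_add_card_filter_not (p := (N + 1 ∈ ·)), add_comm,
    filter_sparseSets_add_two_notMem, card_filter_sparseSets_add_two_mem]

theorem card_sparseSets (N m : ℕ) : #(sparseSets N m) = (N + 1 - m).choose m := by
  induction N using Nat.twoStepInduction generalizing m with
  | zero =>
    rcases m with _ | m
    · rfl
    · simp [sparseSets]
  | one =>
    rcases m with _ | _ | m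
    · rfl
    · rfl
    · simp [sparseSets]
  | more N ih₀ ih₁ =>
    rcases m with _ | m
    · simp [sparseSets_zero]
    rw [card_sparseSets_add_two, ih₀, ih₁]
    rcases le_or_gt m (N + 1) with hm | hm
    · rw [show N + 2 + 1 - (m + 1) = N + 1 - m + 1 by omega, Nat.choose_succ_succ',
        show N + 1 + 1 - (m + 1) = N + 1 - m by omega, add_comm]
    · obtain ⟨m, rfl⟩ : ∃ m', m = m' + 1 := ⟨m - 1, by omega⟩
      simp [show N + 1 - (m + 1) = 0 by omega, show N + 2 + 1 - (m + 1 + 1) = 0 by omega,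
        show N + 1 + 1 - (m + 1 + 1) = 0 by omega]

namespace Equiv.Perm

variable {n : ℕ} {τ : Equiv.Perm (Fin n)}

lemma apply_eq_of_apply_eq_pred (hτ : ∀ i, (τ i : ℕ) ≤ i + 1 ∧ (i : ℕ) ≤ τ i + 1)
    {i j : Fin n} (hij : (j : ℕ) = i + 1) (h : τ j = i) : τ i = j := by
  obtain ⟨m, hm⟩ : ∃ m, (i : ℕ) = m := ⟨_, rfl⟩
  induction m using Nat.strong_induction_on generalizing i j with
  | _ m ih =>
    have hne : (τ i : ℕ) ≠ i := fun e => by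
      have := congrArg Fin.val (τ.injective ((Fin.ext e).trans h.symm)); omega
    by_contra hτi
    have hpred : (i : ℕ) = τ i + 1 := by have := hτ i; omega
    -- otherwise `τ i + 1 = i`, and the induction hypothesis gives `τ (τ i) = i = τ j`
    exact hτi (τ.injective ((ih (τ i) (by omega) hpred rfl rfl).trans h.symm))

lemma apply_eq_of_apply_eq_succ (hτ : ∀ i, (τ i : ℕ) ≤ i + 1 ∧ (i : ℕ) ≤ τ i + 1)
    {i j : Fin n} (hij : (j : ℕ) = i + 1) (h : τ i = j) : τ j = i := by
  have hτ' : ∀ i, (τ⁻¹ i : ℕ) ≤ i + 1 ∧ (i : ℕ) ≤ τ⁻¹ i + 1 := fun i => by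
    have := hτ (τ⁻¹ i); simp only [coe_inv, apply_symm_apply] at this ⊢; omega
  rw [← eq_inv_iff_eq, apply_eq_of_apply_eq_pred hτ' hij (inv_eq_iff_eq.mpr h.symm)]

end Equiv.Perm

section

variable {n : ℕ}

lemma exists_signAct_eq_iff (v w : Fin n → ℚ) :
    (∃ σ ε, IsSign ε ∧ signAct σ ε v = w) ↔
      ∃ σ : Equiv.Perm (Fin n), ∀ i, |w (σ i)| = |v i| := by
  constructor
  · rintro ⟨σ, ε, hε, rfl⟩
    refine ⟨σ, fun i => ?_⟩
    rcases hε (σ i) with h | h <;> simp [signAct, h]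
  · rintro ⟨σ, hσ⟩
    refine ⟨σ, fun i => if v (σ⁻¹ i) = w i then 1 else -1,
      fun i => by dsimp only; split_ifs <;> simp, funext fun i => ?_⟩
    have habs : |v (σ⁻¹ i)| = |w i| := by simpa using (hσ (σ⁻¹ i)).symm
    simp only [signAct]
    split_ifs with h
    · rw [h, one_mul]
    · rcases abs_eq_abs.mp habs with h' | h'
      · exact absurd h' h
      · rw [h']; ring

def fundWeight (n k : ℕ) : Fin n → ℚ := fun i => if (i : ℕ) < k then 1 else 0

lemma exists_eq_signAct_fundWeight_iff {k : ℕ} (hk : k ≤ n) (μ : Fin n → ℚ) :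
    (∃ σ ε, IsSign ε ∧ μ = signAct σ ε (fundWeight n k)) ↔
      (∀ i, μ i = -1 ∨ μ i = 0 ∨ μ i = 1) ∧ #{i | μ i ≠ 0} = k := by
  simp only [@eq_comm _ μ, exists_signAct_eq_iff]
  constructor
  · rintro ⟨σ, hσ⟩
    refine ⟨fun j => ?_, ?_⟩
    · have := hσ (σ⁻¹ j)
      simp only [Equiv.Perm.coe_inv, Equiv.apply_symm_apply, fundWeight] at this
      split_ifs at this
      · rcases (abs_eq zero_le_one).mp (by simpa using this) with h | h <;> simp [h]
      · simp_all
    · calc #{j | μ j ≠ 0} = #{i | μ (σ i) ≠ 0} := card_equiv σ.symm (by simp)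
        _ = #{i : Fin n | (i : ℕ) < k} := by
          congr 1
          refine filter_congr fun i _ => ?_
          rw [← abs_ne_zero, hσ, fundWeight]
          split_ifs with h <;> simpa using h
        _ = k := by rw [Fin.card_filter_val_lt, min_eq_right hk]
  · rintro ⟨hval, hcard⟩
    have e : {i : Fin n // (i : ℕ) < k} ≃ {j // μ j ≠ 0} :=
      Fintype.equivOfCardEq (by
        rw [Fintype.card_subtype, Fintype.card_subtype, hcard, Fin.card_filter_val_lt,
          min_eq_right hk])
    refine ⟨e.extendSubtype, fun i => ?_⟩
    by_cases hi : (i : ℕ) < k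
    · have := e.extendSubtype_mem i hi
      simp only [fundWeight, if_pos hi, abs_one]
      rcases hval (e.extendSubtype i) with h | h | h <;> simp_all
    · have := e.extendSubtype_not_mem i hi
      simp_all [fundWeight, if_neg hi]

def weylVector (n : ℕ) : Fin n → ℚ := fun j => (2 * (n : ℚ) - 2 * ((j : ℕ) + 1) + 1) / 2

lemma weylVector_apply (j : Fin n) : weylVector n j = n - j - 1 / 2 := by
  rw [weylVector]; ring

lemma weylVector_nonneg (j : Fin n) : 0 ≤ weylVector n j := by
  have : ((j : ℕ) : ℚ) + 1 ≤ n := by exact_mod_cast j.isLt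
  rw [weylVector_apply]; linarith

lemma abs_one_add_weylVector_eq_iff (i j : Fin n) :
    |1 + weylVector n i| = weylVector n j ↔ (j : ℕ) + 1 = i := by
  have hi : ((i : ℕ) : ℚ) + 1 ≤ n := by exact_mod_cast i.isLt
  rw [weylVector_apply, weylVector_apply, abs_of_pos (by linarith), ← @Nat.cast_inj ℚ]
  push_cast
  constructor <;> intro h <;> linarith

lemma abs_weylVector_eq_iff (i j : Fin n) : |weylVector n i| = weylVector n j ↔ j = i := by
  rw [abs_of_nonneg (weylVector_nonneg i), weylVector_apply, weylVector_apply, ← Fin.val_inj,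
    ← @Nat.cast_inj ℚ]
  constructor <;> intro h <;> linarith

lemma abs_neg_one_add_weylVector_eq_iff (i j : Fin n) :
    |-1 + weylVector n i| = weylVector n j ↔ (j : ℕ) = min ((i : ℕ) + 1) (n - 1) := by
  rw [weylVector_apply, weylVector_apply]
  rcases Nat.lt_or_ge ((i : ℕ) + 1) n with h | h
  · have : ((i : ℕ) : ℚ) + 2 ≤ n := by exact_mod_cast h
    rw [abs_of_nonneg (by linarith), min_eq_left (by omega), ← @Nat.cast_inj ℚ]
    push_cast
    constructor <;> intro h <;> linarith
  · have hn : (n : ℚ) = (i : ℕ) + 1 := by exact_mod_cast (by omega : n = (i : ℕ) + 1)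
    rw [min_eq_right (by omega), hn,
      show -1 + ((i : ℕ) + 1 - (i : ℕ) - 1 / 2 : ℚ) = -1 / 2 by ring,
      show (n - 1 : ℕ) = i by omega, abs_of_neg (by norm_num), ← @Nat.cast_inj ℚ]
    constructor <;> intro h <;> linarith

def pairPattern (n : ℕ) (A : Finset ℕ) (t : ℕ) (i : Fin n) : ℚ :=
  if (i : ℕ) ∈ A then -1
  else if 0 < (i : ℕ) ∧ (i : ℕ) - 1 ∈ A then 1
  else if t = 1 ∧ (i : ℕ) + 1 = n then -1
  else 0

lemma pairPattern_eq_neg_one_or_eq_zero_or_eq_one (A : Finset ℕ) (t : ℕ) (i : Fin n) :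
    pairPattern n A t i = -1 ∨ pairPattern n A t i = 0 ∨ pairPattern n A t i = 1 := by
  unfold pairPattern; split_ifs <;> norm_num

lemma card_support_pairPattern {A : Finset ℕ} {t : ℕ} (hA : NoConsecutive A)
    (hAn : A ⊆ range (n - 1 - t)) (ht : t ≤ 1) (htn : t ≤ n) :
    #{i | pairPattern n A t i ≠ 0} = 2 * #A + t := by
  have hsupp : ({i | pairPattern n A t i ≠ 0} : Finset (Fin n)).map Fin.valEmbedding =
      (A ∪ A.map (addRightEmbedding 1)) ∪ Ico (n - t) n := by
    ext a
    simp only [mem_map, mem_filter, mem_univ, true_and, Fin.valEmbedding_apply, mem_union,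
      mem_Ico, addRightEmbedding_apply]
    constructor
    · rintro ⟨i, hi, rfl⟩
      unfold pairPattern at hi
      split_ifs at hi <;> grind
    · intro h
      have ha : a < n := by grind
      refine ⟨⟨a, ha⟩, ?_, rfl⟩
      unfold pairPattern
      split_ifs <;> grind
  have hdisj₁ : Disjoint A (A.map (addRightEmbedding 1)) := by
    simp only [disjoint_left, mem_map, addRightEmbedding_apply]
    rintro _ ha ⟨b, hb, rfl⟩
    exact hA b hb ha
  have hdisj₂ : Disjoint (A ∪ A.map (addRightEmbedding 1)) (Ico (n - t) n) := by
    simp only [disjoint_left, mem_union, mem_map, addRightEmbedding_apply, mem_Ico]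
    rintro _ (ha | ⟨b, hb, rfl⟩) <;> grind
  rw [← card_map Fin.valEmbedding, hsupp, card_union_of_disjoint hdisj₂,
    card_union_of_disjoint hdisj₁, card_map, Nat.card_Ico]
  omega

def negPositions (μ : Fin n → ℚ) (N : ℕ) : Finset ℕ :=
  {a ∈ range N | ∃ i : Fin n, (i : ℕ) = a ∧ μ i = -1}

lemma coe_mem_negPositions {μ : Fin n → ℚ} {N : ℕ} {i : Fin n} :
    (i : ℕ) ∈ negPositions μ N ↔ (i : ℕ) < N ∧ μ i = -1 := by
  simp [negPositions, Fin.val_inj]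

lemma negPositions_pairPattern {A : Finset ℕ} {t : ℕ} (hA : A ⊆ range (n - 1 - t)) :
    negPositions (pairPattern n A t) (n - 1 - t) = A := by
  ext a
  simp only [negPositions, mem_filter, mem_range]
  constructor
  · rintro ⟨ha, i, rfl, hi⟩
    unfold pairPattern at hi
    split_ifs at hi with h₁ h₂ h₃ <;> first | exact h₁ | omega | norm_num at hi
  · intro ha
    have := mem_range.mp (hA ha)
    exact ⟨this, ⟨a, by omega⟩, rfl, by simp [pairPattern, ha]⟩

lemma pairPattern_injOn (m t : ℕ) :
    Set.InjOn (pairPattern n · t) (sparseSets (n - 1 - t) m) := by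
  intro A hA B hB h
  rw [← negPositions_pairPattern (mem_sparseSets.mp hA).1,
    ← negPositions_pairPattern (mem_sparseSets.mp hB).1]
  exact congrArg (negPositions · (n - 1 - t)) h

def pairSwap (n : ℕ) (A : Finset ℕ) (i : Fin n) : Fin n :=
  if h : (i : ℕ) ∈ A ∧ (i : ℕ) + 1 < n then ⟨i + 1, h.2⟩
  else if 0 < (i : ℕ) ∧ (i : ℕ) - 1 ∈ A then ⟨i - 1, by omega⟩
  else i

lemma val_pairSwap (A : Finset ℕ) (i : Fin n) :
    (pairSwap n A i : ℕ) =
      if (i : ℕ) ∈ A ∧ (i : ℕ) + 1 < n then (i : ℕ) + 1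
      else if 0 < (i : ℕ) ∧ (i : ℕ) - 1 ∈ A then (i : ℕ) - 1 else i := by
  unfold pairSwap; split_ifs <;> rfl

lemma pairSwap_involutive {A : Finset ℕ} (hA : NoConsecutive A) :
    Function.Involutive (pairSwap n A) := by
  intro i
  apply Fin.ext
  have h₁ := hA i
  have h₂ := hA (i - 1)
  rw [val_pairSwap, val_pairSwap]
  split_ifs <;> grind

/-- The combinatorial form of `|μ i + ρ i| = ρ (τ i)` for `μ` with entries in `{-1, 0, 1}`. -/
def IsDotPerm (μ : Fin n → ℚ) (τ : Equiv.Perm (Fin n)) : Prop :=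
  ∀ i, (μ i = 1 ∧ (τ i : ℕ) + 1 = i) ∨ (μ i = 0 ∧ τ i = i) ∨
    (μ i = -1 ∧ (τ i : ℕ) = min ((i : ℕ) + 1) (n - 1))

lemma exists_signAct_add_weylVector_eq_iff {μ : Fin n → ℚ}
    (hμ : ∀ i, μ i = -1 ∨ μ i = 0 ∨ μ i = 1) :
    (∃ σ ε, IsSign ε ∧ signAct σ ε (μ + weylVector n) = weylVector n) ↔
      ∃ τ, IsDotPerm μ τ := by
  rw [exists_signAct_eq_iff]
  refine exists_congr fun τ => forall_congr' fun i => ?_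
  rw [abs_of_nonneg (weylVector_nonneg _), Pi.add_apply, eq_comm]
  rcases hμ i with h | h | h <;> norm_num [h, abs_one_add_weylVector_eq_iff,
    abs_weylVector_eq_iff, abs_neg_one_add_weylVector_eq_iff]

lemma isDotPerm_pairPattern {A : Finset ℕ} {t : ℕ} (hA : NoConsecutive A)
    (hAn : A ⊆ range (n - 1 - t)) :
    IsDotPerm (pairPattern n A t) (pairSwap_involutive (n := n) hA).toPerm := by
  intro i
  have hi : (i : ℕ) ∈ A → (i : ℕ) < n - 1 - t := fun h => mem_range.mp (hAn h)
  simp only [Function.Involutive.coe_toPerm, ← Fin.val_inj, val_pairSwap, pairPattern]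
  split_ifs <;> grind

namespace IsDotPerm

variable {μ : Fin n → ℚ} {τ : Equiv.Perm (Fin n)} (h : IsDotPerm μ τ)
include h

lemma eq_neg_one_or_eq_zero_or_eq_one (i : Fin n) : μ i = -1 ∨ μ i = 0 ∨ μ i = 1 := by
  rcases h i with ⟨h, -⟩ | ⟨h, -⟩ | ⟨h, -⟩ <;> simp [h]

lemma displacement_le_one (i : Fin n) : (τ i : ℕ) ≤ i + 1 ∧ (i : ℕ) ≤ τ i + 1 := by
  have := i.isLt
  rcases h i with ⟨-, h⟩ | ⟨-, h⟩ | ⟨-, h⟩ <;> [omega; (rw [h]; omega); omega]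

lemma eq_one_of_eq_neg_one {i j : Fin n} (hij : (j : ℕ) = i + 1) (hi : μ i = -1) :
    μ j = 1 := by
  have := j.isLt
  have hτi : τ i = j := by
    rcases h i with ⟨h1, -⟩ | ⟨h1, -⟩ | ⟨-, h1⟩
    · norm_num [hi] at h1
    · norm_num [hi] at h1
    · exact Fin.ext (by omega)
  have hτj := Equiv.Perm.apply_eq_of_apply_eq_succ h.displacement_le_one hij hτi
  rcases h j with ⟨h1, -⟩ | ⟨-, h1⟩ | ⟨-, h1⟩
  · exact h1
  · exact absurd (hτj.symm.trans h1) (fun e => by have := congrArg Fin.val e; omega)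
  · rw [hτj] at h1; omega

lemma exists_eq_neg_one_of_eq_one {i : Fin n} (hi : μ i = 1) :
    ∃ j : Fin n, (i : ℕ) = j + 1 ∧ μ j = -1 := by
  have hτi : (τ i : ℕ) + 1 = i := by
    rcases h i with ⟨-, h1⟩ | ⟨h1, -⟩ | ⟨h1, -⟩
    · exact h1
    · norm_num [hi] at h1
    · norm_num [hi] at h1
  have hτj := Equiv.Perm.apply_eq_of_apply_eq_pred h.displacement_le_one hτi.symm rfl
  refine ⟨τ i, hτi.symm, ?_⟩
  rcases h (τ i) with ⟨-, h1⟩ | ⟨-, h1⟩ | ⟨h1, -⟩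
  · rw [hτj] at h1; omega
  · rw [hτj] at h1; rw [h1] at hτi; omega
  · exact h1

lemma noConsecutive_negPositions (N : ℕ) : NoConsecutive (negPositions μ N) := by
  intro a ha ha'
  simp only [negPositions, mem_filter] at ha ha'
  obtain ⟨-, i, rfl, hi⟩ := ha
  obtain ⟨-, j, hij, hj⟩ := ha'
  have := h.eq_one_of_eq_neg_one hij hi
  rw [hj] at this; norm_num at this

section

variable {t : ℕ} (ht : t ≤ 1)
  (hlast : ∀ l : Fin n, (l : ℕ) + 1 = n → (μ l = -1 ↔ t = 1))
include ht hlast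

lemma lt_of_eq_neg_one {i : Fin n} (hi : μ i = -1) (hin : (i : ℕ) + 1 < n) :
    (i : ℕ) < n - 1 - t := by
  by_contra hge
  have hl := h.eq_one_of_eq_neg_one (j := ⟨i + 1, hin⟩) rfl hi
  rw [(hlast _ (by dsimp only; omega)).mpr (by omega)] at hl
  norm_num at hl

lemma eq_pairPattern_negPositions : μ = pairPattern n (negPositions μ (n - 1 - t)) t := by
  have hmem : ∀ i : Fin n, μ i = -1 → (i : ℕ) + 1 < n →
      (i : ℕ) ∈ negPositions μ (n - 1 - t) :=
    fun i hi hin => coe_mem_negPositions.mpr ⟨h.lt_of_eq_neg_one ht hlast hi hin, hi⟩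
  funext i
  unfold pairPattern
  split_ifs with h₁ h₂ h₃
  · exact (coe_mem_negPositions.mp h₁).2
  · simp only [negPositions, mem_filter] at h₂
    obtain ⟨hi₀, -, j, hj, hμj⟩ := h₂
    exact h.eq_one_of_eq_neg_one (by omega) hμj
  · exact (hlast i h₃.2).mpr h₃.1
  · rcases h.eq_neg_one_or_eq_zero_or_eq_one i with hi | hi | hi
    · rcases Nat.lt_or_ge ((i : ℕ) + 1) n with hin | hin
      · exact absurd (hmem i hi hin) h₁
      · exact absurd ⟨(hlast i (by omega)).mp hi, by omega⟩ h₃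
    · exact hi
    · obtain ⟨j, hij, hj⟩ := h.exists_eq_neg_one_of_eq_one hi
      refine absurd ⟨by omega, ?_⟩ h₂
      rw [show (i : ℕ) - 1 = j by omega]
      exact hmem j hj (by omega)

end

lemma exists_eq_pairPattern : ∃ A t, t ≤ 1 ∧ t ≤ n ∧ A ⊆ range (n - 1 - t) ∧
    NoConsecutive A ∧ μ = pairPattern n A t := by
  by_cases hl : ∃ l : Fin n, (l : ℕ) + 1 = n ∧ μ l = -1
  · obtain ⟨l, hl, hμl⟩ := hl
    have hlast : ∀ i : Fin n, (i : ℕ) + 1 = n → (μ i = -1 ↔ 1 = 1) := fun i hi => by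
      rw [show i = l from Fin.ext (by omega)]; simp [hμl]
    exact ⟨_, 1, le_rfl, by omega, filter_subset _ _, h.noConsecutive_negPositions _,
      h.eq_pairPattern_negPositions le_rfl hlast⟩
  · have hlast : ∀ i : Fin n, (i : ℕ) + 1 = n → (μ i = -1 ↔ 0 = 1) := fun i hi => by
      simpa using fun hμi => hl ⟨i, hi, hμi⟩
    exact ⟨_, 0, zero_le_one, n.zero_le, filter_subset _ _, h.noConsecutive_negPositions _,
      h.eq_pairPattern_negPositions zero_le_one hlast⟩

end IsDotPerm

theorem dotConjugate_fundWeight_eq_image {k : ℕ} (hk : k ≤ n) :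
    {μ : Fin n → ℚ | (∃ σ ε, IsSign ε ∧ μ = signAct σ ε (fundWeight n k)) ∧
      ∃ σ ε, IsSign ε ∧ signAct σ ε (μ + weylVector n) = weylVector n} =
    (sparseSets (n - 1 - k % 2) (k / 2)).image (pairPattern n · (k % 2)) := by
  ext μ
  simp only [Set.mem_ofPred_eq, coe_image, Set.mem_image, mem_coe,
    exists_eq_signAct_fundWeight_iff hk]
  constructor
  · rintro ⟨⟨hμ, hcard⟩, hconj⟩
    obtain ⟨τ, hτ⟩ := (exists_signAct_add_weylVector_eq_iff hμ).mp hconj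
    obtain ⟨A, t, ht, htn, hAn, hA, rfl⟩ := hτ.exists_eq_pairPattern
    rw [card_support_pairPattern hA hAn ht htn] at hcard
    obtain rfl : t = k % 2 := by omega
    exact ⟨A, mem_sparseSets.mpr ⟨hAn, by omega, hA⟩, rfl⟩
  · rintro ⟨A, hA, rfl⟩
    obtain ⟨hAn, hcard, hA⟩ := mem_sparseSets.mp hA
    have hμ := pairPattern_eq_neg_one_or_eq_zero_or_eq_one (n := n) A (k % 2)
    refine ⟨⟨hμ, ?_⟩, (exists_signAct_add_weylVector_eq_iff hμ).mpr
      ⟨_, isDotPerm_pairPattern hA hAn⟩⟩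
    rw [card_support_pairPattern hA hAn (by omega) (by omega)]
    omega

end

theorem stmt0_general (n k : ℕ) (hk : k < n) :
    (let ρ : Fin n → ℚ := fun j => (2 * (n : ℚ) - 2 * ((j : ℕ) + 1) + 1) / 2
     let ω : Fin n → ℚ := fun i => if (i : ℕ) < k then 1 else 0
     Set.ncard {μ : Fin n → ℚ |
        (∃ σ ε, IsSign ε ∧ μ = signAct σ ε ω) ∧
        (∃ σ ε, IsSign ε ∧ signAct σ ε (μ + ρ) = ρ)}) =
      (if k % 2 = 0 then Nat.choose (n - k / 2) (k / 2)
       else Nat.choose (n - (k - 1) / 2 - 1) ((k - 1) / 2)) := by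
  show Set.ncard {μ : Fin n → ℚ |
      (∃ σ ε, IsSign ε ∧ μ = signAct σ ε (fundWeight n k)) ∧
        ∃ σ ε, IsSign ε ∧ signAct σ ε (μ + weylVector n) = weylVector n} = _
  rw [dotConjugate_fundWeight_eq_image hk.le, Set.ncard_coe_finset,
    card_image_of_injOn (pairPattern_injOn _ _), card_sparseSets]
  split_ifs <;> congr 1 <;> omega

/-- For the root system B_n with ρ = (1/2)Σ (2n-2j+1)e_j and ω_k = e_1 + ⋯ + e_k,
the number of weights of the form w·ω_k (w in the Weyl group W = Sₙ ⋉ (ℤ/2)ⁿ) that are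
conjugate to 0 (i.e. w·ω_k + ρ lies in the W-orbit of ρ) is
binomial(n - k/2, k/2) if k is even and binomial(n - (k-1)/2 - 1, (k-1)/2) if k is odd. -/
theorem stmt0 (n k : ℕ) (hk : k < n) (hk1 : 1 ≤ k) :
    (let ρ : Fin n → ℚ := fun j => (2 * (n : ℚ) - 2 * ((j : ℕ) + 1) + 1) / 2
     let ω : Fin n → ℚ := fun i => if (i : ℕ) < k then 1 else 0
     Set.ncard {μ : Fin n → ℚ |
        (∃ σ ε, IsSign ε ∧ μ = signAct σ ε ω) ∧
        (∃ σ ε, IsSign ε ∧ signAct σ ε (μ + ρ) = ρ)}) =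
      (if k % 2 = 0 then Nat.choose (n - k / 2) (k / 2)
       else Nat.choose (n - (k - 1) / 2 - 1) ((k - 1) / 2)) :=
  stmt0_general n k hk
end

section
/- With b_m = (q+1) q^{-2m+2}(1-q^{4m-2})/(1-q^2) and Ψ = (q+1)(q^{2n-2}+q^{2-2n}), the function Γ(2,n;k) defined from the index set J(2,n,k) satisfies the closed formula Γ(2,n;k) = Σ_{s=0}^{k-1} (-1)^{s+k+1} binomial(n-2k-1+s, s) b_{n-k+s+1} + Σ_{r=0}^{k-1} (-1)^{r+k} binomial(n-2k-1+r, r) b_{k-r+1}. -/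
noncomputable section

open RatFunc Finset

/-- The index set J(h,k,r) = {(j₁,…,j_r) : h < j₁ < j₂ - 1 < ⋯ < j_r - (r-1) ≤ k}. -/
def Jset (h k r : ℕ) : Finset (Fin r → Fin (k + 1)) :=
  Finset.univ.filter fun j =>
    (∀ s : Fin r, h < (j s : ℕ) ∧ (j s : ℕ) ≤ k) ∧
    ∀ s t : Fin r, (s : ℕ) + 1 = (t : ℕ) → (j s : ℕ) + 2 ≤ (j t : ℕ)

/-- Γ(h,k;r) = Σ_{j ∈ J(h,k,r)} (q+1) Σ_{s=1}^r (q^{2(j_s-1)} + q^{-2(j_s-1)}). -/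
def Gam (h k r : ℕ) : RatFunc ℚ :=
  ∑ j ∈ Jset h k r, ((X : RatFunc ℚ) + 1) *
    ∑ s : Fin r, ((X : RatFunc ℚ) ^ (2 * ((j s : ℕ) : ℤ) - 2) + X ^ (2 - 2 * ((j s : ℕ) : ℤ)))

/-- b_m(q) = (q+1) q^{2-2m} (1 - q^{4m-2})/(1-q^2). -/
def bRF (m : ℤ) : RatFunc ℚ :=
  ((X : RatFunc ℚ) + 1) * X ^ (2 - 2 * m) * (1 - X ^ (4 * m - 2)) / (1 - X ^ (2 : ℤ))


-- helper nat lemmas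
lemma hockey (s : ℕ) : ∀ T : ℕ, ∑ t ∈ range T, (t + s).choose s = (T + s).choose (s + 1) := by
  intro T
  induction T with
  | zero => simp [Nat.choose_eq_zero_of_lt]
  | succ T ih =>
      rw [Finset.sum_range_succ, ih]
      have : T + 1 + s = (T + s) + 1 := by omega
      rw [this, Nat.choose_succ_succ, Nat.add_comm]

lemma altsum (A : ℕ) (hA : 1 ≤ A) : ∀ b : ℕ,
    ∑ r ∈ range (b + 1), (-1 : ℤ) ^ r * (A.choose r : ℤ) = (-1) ^ b * ((A - 1).choose b : ℤ) := by
  obtain ⟨A', rfl⟩ : ∃ A', A = A' + 1 := ⟨A - 1, by omega⟩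
  intro b
  induction b with
  | zero => simp
  | succ b ih =>
      rw [Finset.sum_range_succ, ih, Nat.choose_succ_succ]
      push_cast
      ring_nf
      simp [pow_succ]
      ring

lemma negpow (a b : ℕ) (h : a % 2 = b % 2) : (-1 : ℤ) ^ a = (-1 : ℤ) ^ b := by
  rcases Nat.even_or_odd a with ha | ha
  · have hb : Even b := by
      rcases ha with ⟨c, hc⟩; exact ⟨b / 2, by omega⟩
    rw [ha.neg_one_pow, hb.neg_one_pow]
  · have hb : Odd b := by
      rcases ha with ⟨c, hc⟩; exact ⟨b / 2, by omega⟩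
    rw [ha.neg_one_pow, hb.neg_one_pow]

-- Jset lemmas
lemma mem_Jset {h k r : ℕ} {j : Fin r → Fin (k+1)} :
    j ∈ Jset h k r ↔ ((∀ s : Fin r, h < (j s : ℕ) ∧ (j s : ℕ) ≤ k) ∧
      ∀ s t : Fin r, (s : ℕ) + 1 = (t : ℕ) → (j s : ℕ) + 2 ≤ (j t : ℕ)) := by
  simp [Jset]

lemma Jset_mono {h k r : ℕ} {j : Fin r → Fin (k+1)} (hj : j ∈ Jset h k r)
    {s t : Fin r} (hst : (s : ℕ) < (t : ℕ)) : (j s : ℕ) + 2 ≤ (j t : ℕ) := by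
  rw [mem_Jset] at hj
  obtain ⟨-, hgap⟩ := hj
  obtain ⟨d, hd⟩ : ∃ d, (t : ℕ) = (s : ℕ) + 1 + d := ⟨t - s - 1, by omega⟩
  induction d generalizing t with
  | zero => exact hgap s t (by omega)
  | succ d ih =>
      have htpos : 0 < (t : ℕ) := by omega
      set t' : Fin r := ⟨(t : ℕ) - 1, by omega⟩ with ht'
      have h1 : (j s : ℕ) + 2 ≤ (j t' : ℕ) := ih (by simp [ht']; omega) (by simp [ht']; omega)
      have h2 : (j t' : ℕ) + 2 ≤ (j t : ℕ) := hgap t' t (by simp [ht']; omega)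
      omega

lemma pascal_diff (a k : ℕ) (hk : 1 ≤ k) :
    ((a+1).choose k : ℤ) - (a.choose k : ℤ) = (a.choose (k-1) : ℤ) := by
  obtain ⟨k', rfl⟩ : ∃ k', k = k'+1 := ⟨k-1, by omega⟩
  rw [Nat.choose_succ_succ]
  push_cast
  ring

lemma altIcc0 (A : ℕ) (hA : 1 ≤ A) (b : ℕ) :
    ∑ r ∈ Icc 0 b, (-1:ℤ)^r * (A.choose r : ℤ) = (-1:ℤ)^b * ((A-1).choose b : ℤ) := by
  have : Icc 0 b = range (b+1) := by ext x; simp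
  rw [this, altsum A hA b]

lemma altIcc (A : ℕ) (hA : 1 ≤ A) (a b : ℕ) (ha : 1 ≤ a) (hab : a ≤ b) :
    ∑ r ∈ Icc a b, (-1:ℤ)^r * (A.choose r : ℤ)
      = (-1:ℤ)^b * ((A-1).choose b : ℤ) - (-1:ℤ)^(a-1) * ((A-1).choose (a-1) : ℤ) := by
  rw [← Finset.Ico_add_one_right_eq_Icc, Finset.sum_Ico_eq_sub _ (by omega), altsum A hA b]
  congr 1
  have he : a = (a-1)+1 := by omega
  rw [he, altsum A hA (a-1)]
  simp

lemma innersum (k M A a₀ b₀ : ℕ) (ha : M ≤ k + a₀) (hb : M ≤ k + b₀) :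
    ∑ m ∈ Icc a₀ b₀, (-1:ℤ)^(k+m-M+k) * (A.choose (k+m-M) : ℤ)
      = ∑ r ∈ Icc (k+a₀-M) (k+b₀-M), (-1:ℤ)^(r+k) * (A.choose r : ℤ) := by
  apply Finset.sum_nbij' (i := fun m => k+m-M) (j := fun r => M+r-k)
  · intro m hm; rw [Finset.mem_Icc] at *; omega
  · intro r hr; rw [Finset.mem_Icc] at *; omega
  · intro m hm; rw [Finset.mem_Icc] at hm; omega
  · intro r hr; rw [Finset.mem_Icc] at hr; omega
  · intro m hm
    rfl

lemma INT (k h n M : ℕ) (hk : 1 ≤ k) (hh : 1 ≤ h) (hn : 2*k+h+1 ≤ n)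
    (hM1 : h ≤ M) (hM2 : M ≤ n) :
    (if h+1 ≤ M then ((n-M-k).choose k : ℤ) else 0)
      - (if M+1 ≤ n then ((n-(M+1)-k).choose k : ℤ) else 0)
      + (if h+2 ≤ M ∧ M ≤ n-k then
          ∑ m ∈ Finset.Icc (max (h+1) (M-k)) (min (M-1) (n-2*k)),
            (-1:ℤ)^(k+m-M+k) * ((n-k-M).choose (k+m-M) : ℤ)
        else 0)
    = (if M = n-k then (-1:ℤ)^k else 0)
      + (if M ≤ k+h then (-1:ℤ)^(k+h-M+k+1) * ((n-k-1-M).choose (k+h-M) : ℤ) else 0) := by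
  have sg1 : (-1:ℤ)^(k+h-M+k+1) = -((-1:ℤ)^k * (-1:ℤ)^(k+h-M)) := by
    rw [pow_succ, pow_add]; ring
  have sg2 : (-1:ℤ)^k * (-1:ℤ)^(k-1) = -1 := by
    rw [← pow_add]; exact Odd.neg_one_pow ⟨k-1, by omega⟩
  by_cases hMa : M = h
  · rw [if_neg (by omega), if_pos (by omega), if_neg (by omega), if_neg (by omega),
      if_pos (by omega)]
    rw [show k+h-M = k by omega, show n-(M+1)-k = n-k-1-M by omega,
      show k+k+1 = 2*k+1 by omega,
      show ((-1:ℤ)^(2*k+1)) = -1 from Odd.neg_one_pow ⟨k, by omega⟩]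
    ring
  by_cases hMb : M = h+1
  · rw [if_pos (by omega), if_pos (by omega), if_neg (by omega), if_neg (by omega),
      if_pos (by omega)]
    rw [show k+h-M = k-1 by omega, show k-1+k+1 = 2*k by omega,
      show n-(M+1)-k = n-k-1-M by omega,
      show n-M-k = (n-k-1-M)+1 by omega,
      show ((-1:ℤ)^(2*k)) = 1 from Even.neg_one_pow ⟨k, by omega⟩]
    linear_combination pascal_diff (n-k-1-M) k hk
  by_cases hMc : h+2 ≤ M ∧ M ≤ k+h
  · obtain ⟨hc1, hc2⟩ := hMc
    rw [if_pos (by omega), if_pos (by omega), if_pos (by omega), if_neg (by omega),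
      if_pos (by omega)]
    rw [max_eq_left (by omega)]
    have hA : 1 ≤ n-k-M := by omega
    have hIc : ∀ r : ℕ, (-1:ℤ)^(r+k) * ((n-k-M).choose r : ℤ)
        = (-1:ℤ)^k * ((-1:ℤ)^r * ((n-k-M).choose r : ℤ)) := by
      intro r; rw [pow_add]; ring
    by_cases hsub : M ≤ n-2*k+1
    · -- 3a : b₀ = M-1
      rw [min_eq_left (by omega)]
      rw [innersum k M (n-k-M) (h+1) (M-1) (by omega) (by omega)]
      rw [show k+(h+1)-M = k+h+1-M by omega, show k+(M-1)-M = k-1 by omega]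
      rw [Finset.sum_congr rfl (fun r _ => hIc r), ← Finset.mul_sum]
      rw [altIcc (n-k-M) hA (k+h+1-M) (k-1) (by omega) (by omega)]
      rw [show k+h+1-M-1 = k+h-M by omega]
      rw [show n-(M+1)-k = n-k-1-M by omega, show n-M-k = (n-k-1-M)+1 by omega,
        show n-k-M-1 = n-k-1-M by omega]
      linear_combination pascal_diff (n-k-1-M) k hk
        + ((n-k-1-M).choose (k-1) : ℤ) * sg2
        - ((n-k-1-M).choose (k+h-M) : ℤ) * sg1
    · -- 3b : b₀ = n-2k
      rw [min_eq_right (by omega)]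
      rw [innersum k M (n-k-M) (h+1) (n-2*k) (by omega) (by omega)]
      rw [show k+(h+1)-M = k+h+1-M by omega, show k+(n-2*k)-M = n-k-M by omega]
      rw [Finset.sum_congr rfl (fun r _ => hIc r), ← Finset.mul_sum]
      rw [altIcc (n-k-M) hA (k+h+1-M) (n-k-M) (by omega) (by omega)]
      rw [show k+h+1-M-1 = k+h-M by omega]
      rw [show n-(M+1)-k = n-k-1-M by omega, show n-M-k = (n-k-1-M)+1 by omega,
        show n-k-M-1 = n-k-1-M by omega]
      have hz1 : ((n-k-1-M).choose (n-k-M) : ℤ) = 0 := by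
        norm_cast; exact Nat.choose_eq_zero_of_lt (by omega)
      have c2z : ((n-k-1-M).choose (k-1) : ℤ) = 0 := by
        norm_cast; exact Nat.choose_eq_zero_of_lt (by omega)
      linear_combination pascal_diff (n-k-1-M) k hk + c2z
        + ((-1:ℤ)^k * (-1:ℤ)^(n-k-M)) * hz1
        - ((n-k-1-M).choose (k+h-M) : ℤ) * sg1
  · have hMd : k+h+1 ≤ M := by omega
    by_cases hMe : M = n-k
    · -- case 5
      rw [if_pos (by omega), if_pos (by omega), if_pos (by omega), if_pos hMe,
        if_neg (by omega)]
      rw [max_eq_right (by omega), min_eq_right (by omega)]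
      rw [show (n-2*k : ℕ) = M-k by omega]
      rw [Finset.Icc_self, Finset.sum_singleton]
      rw [show k+(M-k)-M+k = k by omega, show k+(M-k)-M = 0 by omega,
        show n-k-M = 0 by omega, Nat.choose_zero_right]
      have z1 : ((n-M-k).choose k : ℤ) = 0 := by
        norm_cast; exact Nat.choose_eq_zero_of_lt (by omega)
      have z2 : ((n-(M+1)-k).choose k : ℤ) = 0 := by
        norm_cast; exact Nat.choose_eq_zero_of_lt (by omega)
      rw [z1, z2]
      ring
    · by_cases hMf : M ≤ n-k-1
      · -- middle
        rw [if_pos (by omega), if_pos (by omega), if_pos (by omega), if_neg hMe,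
          if_neg (by omega)]
        rw [max_eq_right (by omega)]
        have hA : 1 ≤ n-k-M := by omega
        have hIc : ∀ r : ℕ, (-1:ℤ)^(r+k) * ((n-k-M).choose r : ℤ)
            = (-1:ℤ)^k * ((-1:ℤ)^r * ((n-k-M).choose r : ℤ)) := by
          intro r; rw [pow_add]; ring
        by_cases hsub : M ≤ n-2*k+1
        · -- 4a
          rw [min_eq_left (by omega)]
          rw [innersum k M (n-k-M) (M-k) (M-1) (by omega) (by omega)]
          rw [show k+(M-k)-M = 0 by omega, show k+(M-1)-M = k-1 by omega]
          rw [Finset.sum_congr rfl (fun r _ => hIc r), ← Finset.mul_sum]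
          rw [altIcc0 (n-k-M) hA (k-1)]
          rw [show n-(M+1)-k = n-k-1-M by omega, show n-M-k = (n-k-1-M)+1 by omega,
            show n-k-M-1 = n-k-1-M by omega]
          linear_combination pascal_diff (n-k-1-M) k hk
            + ((n-k-1-M).choose (k-1) : ℤ) * sg2
        · -- 4b
          rw [min_eq_right (by omega)]
          rw [innersum k M (n-k-M) (M-k) (n-2*k) (by omega) (by omega)]
          rw [show k+(M-k)-M = 0 by omega, show k+(n-2*k)-M = n-k-M by omega]
          rw [Finset.sum_congr rfl (fun r _ => hIc r), ← Finset.mul_sum]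
          rw [altIcc0 (n-k-M) hA (n-k-M)]
          rw [show n-(M+1)-k = n-k-1-M by omega, show n-M-k = (n-k-1-M)+1 by omega,
            show n-k-M-1 = n-k-1-M by omega]
          have hz1 : ((n-k-1-M).choose (n-k-M) : ℤ) = 0 := by
            norm_cast; exact Nat.choose_eq_zero_of_lt (by omega)
          have c2z : ((n-k-1-M).choose (k-1) : ℤ) = 0 := by
            norm_cast; exact Nat.choose_eq_zero_of_lt (by omega)
          linear_combination pascal_diff (n-k-1-M) k hk + c2z
            + ((-1:ℤ)^k * (-1:ℤ)^(n-k-M)) * hz1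
      · -- upper tail
        have hMg : n-k+1 ≤ M := by omega
        rw [if_pos (show h+1 ≤ M by omega),
          if_neg (show ¬(h+2 ≤ M ∧ M ≤ n-k) by omega), if_neg hMe,
          if_neg (show ¬(M ≤ k+h) by omega)]
        have z1 : ((n-M-k).choose k : ℤ) = 0 := by
          norm_cast; exact Nat.choose_eq_zero_of_lt (by omega)
        rw [z1]
        by_cases hc : M+1 ≤ n
        · rw [if_pos hc]
          have z2 : ((n-(M+1)-k).choose k : ℤ) = 0 := by
            norm_cast; exact Nat.choose_eq_zero_of_lt (by omega)
          rw [z2]; ring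
        · rw [if_neg hc]; ring

def cons' {n k : ℕ} (m : ℕ) (t : Fin k → Fin (n+1)) : Fin (k+1) → Fin (n+1) :=
  Fin.cons ⟨min m n, by omega⟩ t

lemma cons'_val {n k : ℕ} (m : ℕ) (t : Fin k → Fin (n+1)) (s : Fin (k+1)) :
    ((cons' m t s : ℕ)) = if hs : (s : ℕ) = 0 then min m n
      else (t ⟨(s:ℕ)-1, by omega⟩ : ℕ) := by
  refine Fin.cases ?_ (fun i => ?_) s
  · simp [cons']
  · have : ((i.succ : Fin (k+1)) : ℕ) ≠ 0 := by simp
    rw [dif_neg this]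
    simp [cons']

lemma split {M : Type*} [AddCommMonoid M] (h n k : ℕ)
    (F : (Fin (k+1) → Fin (n+1)) → M) :
    ∑ j ∈ Jset h n (k+1), F j
      = ∑ x ∈ (Finset.Ioc h n).sigma (fun m => Jset (m+1) n k), F (cons' x.1 x.2) := by
  have recon : ∀ j ∈ Jset h n (k+1), cons' (j 0 : ℕ) (Fin.tail j) = j := by
    intro j hj
    rw [mem_Jset] at hj
    have h0 : ((j 0 : ℕ)) ≤ n := (hj.1 0).2
    simp only [cons']
    have : (⟨min (j 0 : ℕ) n, by omega⟩ : Fin (n+1)) = j 0 := by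
      apply Fin.ext; simp; omega
    rw [this, Fin.cons_self_tail]
  apply Finset.sum_bij' (i := fun j _ => (⟨(j 0 : ℕ), Fin.tail j⟩ : Σ _ : ℕ, (Fin k → Fin (n+1))))
    (j := fun x _ => cons' x.1 x.2)
  · -- hi
    intro j hj
    rw [Finset.mem_sigma]
    rw [mem_Jset] at hj
    obtain ⟨hb, hgap⟩ := hj
    refine ⟨Finset.mem_Ioc.2 ⟨(hb 0).1, (hb 0).2⟩, ?_⟩
    rw [mem_Jset]
    constructor
    · intro s
      have h1 := (hb s.succ).2
      have h2 : ((j 0 : ℕ)) + 2 ≤ (j s.succ : ℕ) := by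
        apply Jset_mono (h := h) (k := n) (r := k+1)
        · rw [mem_Jset]; exact ⟨hb, hgap⟩
        · simp
      simp only [Fin.tail]
      exact ⟨by omega, h1⟩
    · intro s t hst
      simp only [Fin.tail]
      apply hgap
      simp [hst]
  · -- hj
    intro x hx
    rw [Finset.mem_sigma, Finset.mem_Ioc] at hx
    obtain ⟨⟨hm1, hm2⟩, ht⟩ := hx
    rw [mem_Jset] at ht ⊢
    obtain ⟨hb, hgap⟩ := ht
    have hmin : min x.1 n = x.1 := by omega
    constructor
    · intro s
      rw [cons'_val]
      by_cases hs : (s : ℕ) = 0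
      · rw [dif_pos hs, hmin]; exact ⟨hm1, hm2⟩
      · rw [dif_neg hs]
        have := hb ⟨(s:ℕ)-1, by omega⟩
        omega
    · intro s u hsu
      rw [cons'_val, cons'_val]
      have hu : (u : ℕ) ≠ 0 := by omega
      rw [dif_neg hu]
      by_cases hs : (s : ℕ) = 0
      · rw [dif_pos hs, hmin]
        have := (hb ⟨(u:ℕ)-1, by omega⟩).1
        omega
      · rw [dif_neg hs]
        have := hgap ⟨(s:ℕ)-1, by omega⟩ ⟨(u:ℕ)-1, by omega⟩ (by simp; omega)
        exact this
  · intro j hj; exact recon j hj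
  · -- right inverse
    intro x hx
    rw [Finset.mem_sigma, Finset.mem_Ioc] at hx
    have hmin : min x.1 n = x.1 := by omega
    apply Sigma.ext
    · simp [cons', hmin]
    · simp [cons', Fin.tail_cons]
  · intro j hj
    rw [recon j hj]

lemma sum_range_choose' (k : ℕ) : ∀ T, ∑ t ∈ range T, t.choose k = T.choose (k+1) := by
  intro T
  induction T with
  | zero => simp
  | succ T ih => rw [Finset.sum_range_succ, ih, Nat.add_comm, ← Nat.choose_succ_succ]

lemma L2 (k : ℕ) : ∀ N, ∑ t ∈ range N, (t - k).choose k = (N - k).choose (k+1) := by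
  intro N
  induction N with
  | zero => simp
  | succ N ih =>
      rw [Finset.sum_range_succ, ih]
      by_cases hN : N < k
      · have h1 : N - k = 0 := by omega
        have h2 : N + 1 - k = 0 := by omega
        have hk : 1 ≤ k := by omega
        rw [h1, h2]
        simp [Nat.choose_eq_zero_of_lt hk]
      · have h1 : N + 1 - k = (N - k) + 1 := by omega
        rw [h1, Nat.choose_succ_succ, Nat.add_comm]

lemma Jcard : ∀ k h n, (Jset h n k).card = (n+1-(h+k)).choose k := by
  intro k
  induction k with
  | zero =>
      intro h n
      rw [Nat.choose_zero_right]
      have : (Jset h n 0) = Finset.univ := by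
        ext j; simp [Jset, Fin.forall_iff]
      rw [this, Finset.card_univ]
      simp
  | succ k ih =>
      intro h n
      rw [Finset.card_eq_sum_ones, split h n k (fun _ => 1), Finset.sum_sigma]
      have step1 : ∀ m ∈ Finset.Ioc h n,
          (∑ _t ∈ Jset (m+1) n k, (1:ℕ)) = (n - m - k).choose k := by
        intro m _
        rw [← Finset.card_eq_sum_ones, ih]
        congr 1
        omega
      rw [Finset.sum_congr rfl step1]
      have hIoc : Finset.Ioc h n = Finset.Ico (h+1) (n+1) := by
        ext m; simp [Finset.mem_Ioc, Finset.mem_Ico]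
      rw [hIoc, Finset.sum_Ico_eq_sum_range]
      have hN : n + 1 - (h+1) = n - h := by omega
      rw [hN]
      have step2 : ∑ i ∈ range (n-h), (n - (h+1+i) - k).choose k
          = ∑ i ∈ range (n-h), ((fun t => (t - k).choose k) ((n-h) - 1 - i)) := by
        apply Finset.sum_congr rfl
        intro i hi
        rw [Finset.mem_range] at hi
        congr 2
        omega
      have refl := Finset.sum_range_reflect (fun t => (t - k).choose k) (n - h)
      rw [step2, refl, L2]
      congr 1
      omega

lemma Xne : (X : RatFunc ℚ) ≠ 0 := RatFunc.X_ne_zero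

lemma Xsq_ne : (1 - (X : RatFunc ℚ) ^ (2:ℤ)) ≠ 0 := by
  have h2 : ((X : RatFunc ℚ)) ^ (2:ℤ) = (X : RatFunc ℚ)^(2:ℕ) := by
    norm_cast
  rw [h2]
  have : (1 - (X : RatFunc ℚ)^(2:ℕ)) =
      algebraMap (Polynomial ℚ) (RatFunc ℚ) (1 - Polynomial.X^2) := by
    push_cast [map_sub, map_one, map_pow, RatFunc.algebraMap_X]
    rfl
  rw [this]
  apply RatFunc.algebraMap_ne_zero
  intro hcon
  have := congrArg (Polynomial.eval 0) hcon
  simp at this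

lemma bdiff (m : ℕ) (hm : 2 ≤ m) :
    bRF (m : ℤ) - bRF ((m : ℤ) - 1)
      = ((X : RatFunc ℚ) + 1) * ((X : RatFunc ℚ) ^ (2 * (m:ℤ) - 2) + X ^ (2 - 2 * (m:ℤ))) := by
  obtain ⟨j, rfl⟩ : ∃ j, m = j + 2 := ⟨m - 2, by omega⟩
  have e1 : (2 - 2 * ((j+2 : ℕ) : ℤ)) = -((2*j+2 : ℕ) : ℤ) := by push_cast; ring
  have e2 : (4 * ((j+2:ℕ) : ℤ) - 2) = ((4*j+6 : ℕ) : ℤ) := by push_cast; ring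
  have e3 : ((j+2 : ℕ) : ℤ) - 1 = ((j+1 : ℕ) : ℤ) := by push_cast; ring
  have e4 : (2 - 2 * ((j+1 : ℕ) : ℤ)) = -((2*j : ℕ) : ℤ) := by push_cast; ring
  have e5 : (4 * ((j+1:ℕ) : ℤ) - 2) = ((4*j+2 : ℕ) : ℤ) := by push_cast; ring
  have e6 : (2 * ((j+2 : ℕ) : ℤ) - 2) = ((2*j+2 : ℕ) : ℤ) := by push_cast; ring
  have e7 : ((2:ℤ)) = ((2:ℕ) : ℤ) := by norm_num
  rw [bRF, bRF, e3, e1, e2, e4, e5, e6, e7]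
  simp only [zpow_neg, zpow_natCast]
  have h2 := Xsq_ne
  rw [show ((X : RatFunc ℚ)) ^ (2:ℤ) = (X : RatFunc ℚ)^(2:ℕ) from by norm_cast] at h2
  have hXp : ((X : RatFunc ℚ))^(2*j+2) ≠ 0 := pow_ne_zero _ Xne
  have hXp2 : ((X : RatFunc ℚ))^(2*j) ≠ 0 := pow_ne_zero _ Xne
  field_simp
  ring

lemma negpowK (a b : ℕ) (h : a % 2 = b % 2) : (-1 : RatFunc ℚ) ^ a = (-1 : RatFunc ℚ) ^ b := by
  rcases Nat.even_or_odd a with ha | ha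
  · have hb : Even b := by rcases ha with ⟨c, hc⟩; exact ⟨b / 2, by omega⟩
    rw [ha.neg_one_pow, hb.neg_one_pow]
  · have hb : Odd b := by rcases ha with ⟨c, hc⟩; exact ⟨b / 2, by omega⟩
    rw [ha.neg_one_pow, hb.neg_one_pow]

lemma cons'_val0 {n k : ℕ} (m : ℕ) (hm : m ≤ n) (t : Fin k → Fin (n+1)) :
    ((cons' m t 0 : ℕ)) = m := by
  simp [cons']; omega

lemma telescope (β : ℕ → RatFunc ℚ) (a b : ℕ) :
    ∑ m ∈ Finset.Ioc a b, (β m - β (m-1)) = β (a + (b-a)) - β a := by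
  rw [show Finset.Ioc a b = Finset.Ico (a+1) (b+1) from by
    ext x; simp [Finset.mem_Ioc, Finset.mem_Ico]]
  rw [Finset.sum_Ico_eq_sum_range, show b+1-(a+1) = b-a from by omega]
  have e : ∀ i, β (a+1+i) - β (a+1+i-1) = (fun t => β (a+t)) (i+1) - (fun t => β (a+t)) i := by
    intro i
    have e1 : a+1+i = a+(i+1) := by omega
    have e2 : a+(i+1)-1 = a+i := by omega
    simp only [e1, e2]
  rw [Finset.sum_congr rfl (fun i _ => e i), Finset.sum_range_sub (fun t => β (a+t)) (b-a)]
  simp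

lemma hockeyIoc (s a b : ℕ) :
    ∑ m ∈ Finset.Ioc a b, (b-m+s).choose s = (b-a+s).choose (s+1) := by
  rw [show Finset.Ioc a b = Finset.Ico (a+1) (b+1) from by
    ext x; simp [Finset.mem_Ioc, Finset.mem_Ico]]
  rw [Finset.sum_Ico_eq_sum_range, show b+1-(a+1) = b-a from by omega]
  have e : ∀ i, (b-(a+1+i)+s).choose s = (fun t => (t+s).choose s) (b-a-1-i) := by
    intro i; simp only; congr 2; omega
  rw [Finset.sum_congr rfl (fun i _ => e i),
    Finset.sum_range_reflect (fun t => (t+s).choose s) (b-a), hockey s (b-a)]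

lemma master (β : ℕ → RatFunc ℚ) : ∀ (k h n : ℕ), 1 ≤ h → 2*k + h ≤ n + 1 →
    ∑ j ∈ Jset h n k, ∑ s : Fin k, (β (j s : ℕ) - β ((j s : ℕ) - 1))
    = (∑ s ∈ Finset.range k, (-1 : RatFunc ℚ)^(s+k+1) *
        ((n+1-(2*k+h)+s).choose s : RatFunc ℚ) * β (n-k+s+1))
    + ∑ r ∈ Finset.range k, (-1 : RatFunc ℚ)^(r+k) *
        ((n+1-(2*k+h)+r).choose r : RatFunc ℚ) * β (k+h-1-r) := by
  intro k
  induction k with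
  | zero => intro h n _ _; simp
  | succ k ih =>
    intro h n hh hn
    rw [split h n k (fun j => ∑ s : Fin (k+1), (β (j s : ℕ) - β ((j s : ℕ) - 1))),
      Finset.sum_sigma]
    have inner_eq : ∀ m ∈ Finset.Ioc h n, ∀ t ∈ Jset (m+1) n k,
        (∑ s : Fin (k+1), (β ((cons' m t) s : ℕ) - β (((cons' m t) s : ℕ) - 1)))
        = (β m - β (m-1)) + ∑ s : Fin k, (β (t s : ℕ) - β ((t s : ℕ) - 1)) := by
      intro m hm t _
      rw [Finset.mem_Ioc] at hm
      have hhead : (β ((cons' m t) 0 : ℕ) - β (((cons' m t) 0 : ℕ) - 1)) = β m - β (m-1) := by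
        rw [cons'_val0 m hm.2 t]
      have htail : ∀ i : Fin k, (β ((cons' m t) i.succ : ℕ) - β (((cons' m t) i.succ : ℕ) - 1))
          = β (t i : ℕ) - β ((t i : ℕ) - 1) := by
        intro i
        rw [show cons' m t i.succ = t i from by simp [cons']]
      rw [Fin.sum_univ_succ, hhead, Finset.sum_congr rfl (fun i _ => htail i)]
    rw [Finset.sum_congr rfl (fun m hm => Finset.sum_congr rfl (fun t ht => inner_eq m hm t ht))]
    have e2 : ∀ m ∈ Finset.Ioc h n,
        (∑ t ∈ Jset (m+1) n k, ((β m - β (m-1)) + ∑ s : Fin k, (β (t s : ℕ) - β ((t s : ℕ) - 1))))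
        = ((n-m-k).choose k : RatFunc ℚ) * (β m - β (m-1))
          + ∑ t ∈ Jset (m+1) n k, ∑ s : Fin k, (β (t s : ℕ) - β ((t s : ℕ) - 1)) := by
      intro m _
      rw [Finset.sum_add_distrib, Finset.sum_const, Jcard k (m+1) n, nsmul_eq_mul,
        show n+1-(m+1+k) = n-m-k from by omega]
    rw [Finset.sum_congr rfl e2, Finset.sum_add_distrib]
    rcases Nat.eq_zero_or_pos k with hk0 | hk
    · -- k = 0 : total k+1 = 1
      subst hk0
      have g0 : ∀ m ∈ Finset.Ioc h n,
          (∑ t ∈ Jset (m+1) n 0, ∑ s : Fin 0, (β (t s : ℕ) - β ((t s : ℕ) - 1))) = 0 := by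
        intro m _; simp
      rw [Finset.sum_congr rfl g0, Finset.sum_const_zero, add_zero]
      have g1 : ∀ m ∈ Finset.Ioc h n,
          ((n-m-0).choose 0 : RatFunc ℚ) * (β m - β (m-1)) = β m - β (m-1) := by
        intro m _; simp
      rw [Finset.sum_congr rfl g1, telescope β h n]
      rw [show h + (n-h) = n from by omega]
      simp only [zero_add, add_zero, Finset.sum_range_one, Nat.choose_zero_right,
        Nat.cast_one, mul_one]
      rw [show n-1+1 = n from by omega, show 1+h-1 = h from by omega]
      norm_num
      ring
    · -- main step, k ≥ 1
      have hn' : 2*k + h + 1 ≤ n := by omega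
      -- T1 transformation
      have hT1 : (∑ m ∈ Finset.Ioc h n, ((n-m-k).choose k : RatFunc ℚ) * (β m - β (m-1)))
          = (∑ M ∈ Finset.Icc h n,
              (((if h+1 ≤ M then ((n-M-k).choose k : ℤ) else 0) : ℤ) : RatFunc ℚ) * β M)
            - ∑ M ∈ Finset.Icc h n,
              (((if M+1 ≤ n then ((n-(M+1)-k).choose k : ℤ) else 0) : ℤ) : RatFunc ℚ) * β M := by
        have a1 : (∑ m ∈ Finset.Ioc h n, ((n-m-k).choose k : RatFunc ℚ) * (β m - β (m-1)))
            = (∑ m ∈ Finset.Ioc h n, ((n-m-k).choose k : RatFunc ℚ) * β m)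
              - ∑ m ∈ Finset.Ioc h n, ((n-m-k).choose k : RatFunc ℚ) * β (m-1) := by
          rw [← Finset.sum_sub_distrib]
          apply Finset.sum_congr rfl
          intros; ring
        have a2 : (∑ m ∈ Finset.Ioc h n, ((n-m-k).choose k : RatFunc ℚ) * β m)
            = ∑ M ∈ Finset.Icc h n,
              (((if h+1 ≤ M then ((n-M-k).choose k : ℤ) else 0) : ℤ) : RatFunc ℚ) * β M := by
          rw [Finset.sum_congr rfl (fun m hm => ?_),
            Finset.sum_subset (show Finset.Ioc h n ⊆ Finset.Icc h n from fun x hx => by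
              rw [Finset.mem_Ioc] at hx; rw [Finset.mem_Icc]; omega)
              (fun M hM hM2 => ?_)]
          · rw [Finset.mem_Icc] at hM
            rw [Finset.mem_Ioc] at hM2
            rw [if_neg (by omega)]
            simp
          · rw [Finset.mem_Ioc] at hm
            rw [if_pos (show h+1 ≤ m from by omega)]
            push_cast
            ring
        have a3 : (∑ m ∈ Finset.Ioc h n, ((n-m-k).choose k : RatFunc ℚ) * β (m-1))
            = ∑ M ∈ Finset.Icc h (n-1), ((n-(M+1)-k).choose k : RatFunc ℚ) * β M := by
          apply Finset.sum_nbij' (i := fun m => m-1) (j := fun M => M+1)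
          · intro m hm; rw [Finset.mem_Ioc] at hm; rw [Finset.mem_Icc]; omega
          · intro M hM; rw [Finset.mem_Icc] at hM; rw [Finset.mem_Ioc]; omega
          · intro m hm; rw [Finset.mem_Ioc] at hm; omega
          · intro M hM; omega
          · intro m hm
            rw [Finset.mem_Ioc] at hm
            rw [show m-1+1 = m from by omega]
        have a4 : (∑ M ∈ Finset.Icc h (n-1), ((n-(M+1)-k).choose k : RatFunc ℚ) * β M)
            = ∑ M ∈ Finset.Icc h n,
              (((if M+1 ≤ n then ((n-(M+1)-k).choose k : ℤ) else 0) : ℤ) : RatFunc ℚ) * β M := by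
          rw [Finset.sum_congr rfl (fun M hM => ?_),
            Finset.sum_subset (show Finset.Icc h (n-1) ⊆ Finset.Icc h n from fun x hx => by
              rw [Finset.mem_Icc] at hx ⊢; omega)
              (fun M hM hM2 => ?_)]
          · rw [Finset.mem_Icc] at hM hM2
            rw [if_neg (by omega)]
            simp
          · rw [Finset.mem_Icc] at hM
            rw [if_pos (show M+1 ≤ n from by omega)]
            push_cast
            ring
        rw [a1, a2, a3, a4]
      -- tail of the big sum vanishes
      have hzero : (∑ m ∈ Finset.Ioc h n, ∑ t ∈ Jset (m+1) n k,
              ∑ s : Fin k, (β (t s : ℕ) - β ((t s : ℕ) - 1)))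
          = ∑ m ∈ Finset.Ioc h (n-2*k), ∑ t ∈ Jset (m+1) n k,
              ∑ s : Fin k, (β (t s : ℕ) - β ((t s : ℕ) - 1)) := by
        rw [← Finset.sum_Ioc_consecutive _ (show h ≤ n-2*k from by omega)
          (show n-2*k ≤ n from by omega)]
        have hz : ∀ m ∈ Finset.Ioc (n-2*k) n,
            (∑ t ∈ Jset (m+1) n k, ∑ s : Fin k, (β (t s : ℕ) - β ((t s : ℕ) - 1))) = 0 := by
          intro m hm
          rw [Finset.mem_Ioc] at hm
          have hempty : Jset (m+1) n k = ∅ := by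
            rw [← Finset.card_eq_zero, Jcard k (m+1) n]
            exact Nat.choose_eq_zero_of_lt (by omega)
          rw [hempty, Finset.sum_empty]
        rw [Finset.sum_congr rfl hz, Finset.sum_const_zero, add_zero]
      -- IH application
      have hIH : ∀ m ∈ Finset.Ioc h (n-2*k),
          (∑ t ∈ Jset (m+1) n k, ∑ s : Fin k, (β (t s : ℕ) - β ((t s : ℕ) - 1)))
          = (∑ s ∈ Finset.range k, (-1 : RatFunc ℚ)^(s+k+1) *
              ((n-2*k-m+s).choose s : RatFunc ℚ) * β (n-k+s+1))
            + ∑ r ∈ Finset.range k, (-1 : RatFunc ℚ)^(r+k) *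
              ((n-2*k-m+r).choose r : RatFunc ℚ) * β (k+m-r) := by
        intro m hm
        rw [Finset.mem_Ioc] at hm
        rw [ih (m+1) n (by omega) (by omega)]
        congr 1
        · apply Finset.sum_congr rfl; intro s _
          rw [show n+1-(2*k+(m+1))+s = n-2*k-m+s from by omega]
        · apply Finset.sum_congr rfl; intro r _
          rw [show n+1-(2*k+(m+1))+r = n-2*k-m+r from by omega,
            show k+(m+1)-1-r = k+m-r from by omega]
      -- T2a
      have hT2a : (∑ m ∈ Finset.Ioc h (n-2*k), ∑ s ∈ Finset.range k,
            (-1 : RatFunc ℚ)^(s+k+1) * ((n-2*k-m+s).choose s : RatFunc ℚ) * β (n-k+s+1))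
          = ∑ s ∈ Finset.range k, (-1 : RatFunc ℚ)^(s+k+1) *
              ((n-2*k-h+s).choose (s+1) : RatFunc ℚ) * β (n-k+s+1) := by
        rw [Finset.sum_comm]
        apply Finset.sum_congr rfl
        intro s _
        have c1 : ∀ m ∈ Finset.Ioc h (n-2*k),
            (-1 : RatFunc ℚ)^(s+k+1) * ((n-2*k-m+s).choose s : RatFunc ℚ) * β (n-k+s+1)
            = ((n-2*k-m+s).choose s : RatFunc ℚ) * ((-1 : RatFunc ℚ)^(s+k+1) * β (n-k+s+1)) := by
          intros; ring
        rw [Finset.sum_congr rfl c1, ← Finset.sum_mul]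
        rw [show (∑ m ∈ Finset.Ioc h (n-2*k), ((n-2*k-m+s).choose s : RatFunc ℚ))
            = (((∑ m ∈ Finset.Ioc h (n-2*k), (n-2*k-m+s).choose s) : ℕ) : RatFunc ℚ) from by
          push_cast; rfl]
        rw [hockeyIoc s h (n-2*k)]
        ring
      -- R1 relation
      have hR1 : (∑ s ∈ Finset.range (k+1), (-1 : RatFunc ℚ)^(s+(k+1)+1) *
            ((n+1-(2*(k+1)+h)+s).choose s : RatFunc ℚ) * β (n-(k+1)+s+1))
          = (∑ s ∈ Finset.range k, (-1 : RatFunc ℚ)^(s+k+1) *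
              ((n-2*k-h+s).choose (s+1) : RatFunc ℚ) * β (n-k+s+1))
            + (-1 : RatFunc ℚ)^k * β (n-k) := by
        rw [Finset.sum_range_succ']
        congr 1
        · apply Finset.sum_congr rfl
          intro i _
          rw [show n+1-(2*(k+1)+h)+(i+1) = n-2*k-h+i from by omega,
            show n-(k+1)+(i+1)+1 = n-k+i+1 from by omega,
            negpowK (i+1+(k+1)+1) (i+k+1) (by omega)]
        · rw [Nat.choose_zero_right, show n-(k+1)+0+1 = n-k from by omega,
            negpowK (0+(k+1)+1) k (by omega)]
          push_cast; ring
      -- T2b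
      have hT2bi : ∀ m ∈ Finset.Ioc h (n-2*k),
          (∑ r ∈ Finset.range k, (-1 : RatFunc ℚ)^(r+k) *
            ((n-2*k-m+r).choose r : RatFunc ℚ) * β (k+m-r))
          = ∑ M ∈ Finset.Icc (m+1) (k+m), (-1 : RatFunc ℚ)^(k+m-M+k) *
              ((n-k-M).choose (k+m-M) : RatFunc ℚ) * β M := by
        intro m hm
        rw [Finset.mem_Ioc] at hm
        apply Finset.sum_nbij' (i := fun r => k+m-r) (j := fun M => k+m-M)
        · intro r hr; rw [Finset.mem_range] at hr; rw [Finset.mem_Icc]; omega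
        · intro M hM; rw [Finset.mem_Icc] at hM; rw [Finset.mem_range]; omega
        · intro r hr; rw [Finset.mem_range] at hr; omega
        · intro M hM; rw [Finset.mem_Icc] at hM; omega
        · intro r hr
          rw [Finset.mem_range] at hr
          rw [show k+m-(k+m-r) = r from by omega,
            show n-k-(k+m-r) = n-2*k-m+r from by omega]
      have hT2b : (∑ m ∈ Finset.Ioc h (n-2*k), ∑ r ∈ Finset.range k,
            (-1 : RatFunc ℚ)^(r+k) * ((n-2*k-m+r).choose r : RatFunc ℚ) * β (k+m-r))
          = ∑ M ∈ Finset.Icc h n,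
            (((if h+2 ≤ M ∧ M ≤ n-k then
                ∑ m ∈ Finset.Icc (max (h+1) (M-k)) (min (M-1) (n-2*k)),
                  (-1:ℤ)^(k+m-M+k) * ((n-k-M).choose (k+m-M) : ℤ)
              else 0) : ℤ) : RatFunc ℚ) * β M := by
        rw [Finset.sum_congr rfl hT2bi]
        rw [Finset.sum_comm' (s := Finset.Ioc h (n-2*k))
          (t := fun m => Finset.Icc (m+1) (k+m))
          (t' := Finset.Icc (h+2) (n-k))
          (s' := fun M => Finset.Icc (max (h+1) (M-k)) (min (M-1) (n-2*k)))
          (fun m M => by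
            rw [Finset.mem_Ioc, Finset.mem_Icc, Finset.mem_Icc, Finset.mem_Icc]
            omega)]
        have inner : ∀ M ∈ Finset.Icc (h+2) (n-k),
            (∑ m ∈ Finset.Icc (max (h+1) (M-k)) (min (M-1) (n-2*k)),
              (-1 : RatFunc ℚ)^(k+m-M+k) * ((n-k-M).choose (k+m-M) : RatFunc ℚ) * β M)
            = (((if h+2 ≤ M ∧ M ≤ n-k then
                ∑ m ∈ Finset.Icc (max (h+1) (M-k)) (min (M-1) (n-2*k)),
                  (-1:ℤ)^(k+m-M+k) * ((n-k-M).choose (k+m-M) : ℤ)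
              else 0) : ℤ) : RatFunc ℚ) * β M := by
          intro M hM
          rw [Finset.mem_Icc] at hM
          rw [if_pos (show h+2 ≤ M ∧ M ≤ n-k from by omega)]
          rw [← Finset.sum_mul]
          congr 1
          push_cast
          rfl
        rw [Finset.sum_congr rfl inner]
        apply Finset.sum_subset (show Finset.Icc (h+2) (n-k) ⊆ Finset.Icc h n from fun x hx => by
          rw [Finset.mem_Icc] at hx ⊢; omega)
        intro M hM hM2
        rw [Finset.mem_Icc] at hM hM2
        rw [if_neg (show ¬(h+2 ≤ M ∧ M ≤ n-k) from by omega)]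
        simp
      -- R2 conversion
      have hR2 : (∑ r ∈ Finset.range (k+1), (-1 : RatFunc ℚ)^(r+(k+1)) *
            ((n+1-(2*(k+1)+h)+r).choose r : RatFunc ℚ) * β ((k+1)+h-1-r))
          = ∑ M ∈ Finset.Icc h n,
            (((if M ≤ k+h then (-1:ℤ)^(k+h-M+k+1) * ((n-k-1-M).choose (k+h-M) : ℤ)
              else 0) : ℤ) : RatFunc ℚ) * β M := by
        have c1 : (∑ r ∈ Finset.range (k+1), (-1 : RatFunc ℚ)^(r+(k+1)) *
              ((n+1-(2*(k+1)+h)+r).choose r : RatFunc ℚ) * β ((k+1)+h-1-r))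
            = ∑ M ∈ Finset.Icc h (k+h),
              ((((-1:ℤ)^(k+h-M+k+1) * ((n-k-1-M).choose (k+h-M) : ℤ)) : ℤ) : RatFunc ℚ) * β M := by
          apply Finset.sum_nbij' (i := fun r => k+h-r) (j := fun M => k+h-M)
          · intro r hr; rw [Finset.mem_range] at hr; rw [Finset.mem_Icc]; omega
          · intro M hM; rw [Finset.mem_Icc] at hM; rw [Finset.mem_range]; omega
          · intro r hr; rw [Finset.mem_range] at hr; omega
          · intro M hM; rw [Finset.mem_Icc] at hM; omega
          · intro r hr
            rw [Finset.mem_range] at hr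
            rw [show k+h-(k+h-r) = r from by omega,
              show n-k-1-(k+h-r) = n+1-(2*(k+1)+h)+r from by omega,
              show (k+1)+h-1-r = k+h-r from by omega]
            push_cast
            rw [show r+k+1 = r+(k+1) from by omega]
        rw [c1]
        rw [Finset.sum_congr rfl (fun M hM => ?_),
          Finset.sum_subset (show Finset.Icc h (k+h) ⊆ Finset.Icc h n from fun x hx => by
            rw [Finset.mem_Icc] at hx ⊢; omega)
            (fun M hM hM2 => ?_)]
        · rw [Finset.mem_Icc] at hM hM2
          rw [if_neg (show ¬(M ≤ k+h) from by omega)]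
          simp
        · rw [Finset.mem_Icc] at hM
          rw [if_pos (show M ≤ k+h from by omega)]
      -- the stray (-1)^k β (n-k)
      have hNK : (-1 : RatFunc ℚ)^k * β (n-k)
          = ∑ M ∈ Finset.Icc h n,
            (((if M = n-k then ((-1:ℤ)^k) else 0) : ℤ) : RatFunc ℚ) * β M := by
        have c1 : ∀ M ∈ Finset.Icc h n, (((if M = n-k then ((-1:ℤ)^k) else 0) : ℤ) : RatFunc ℚ) * β M
            = if M = n-k then ((-1 : RatFunc ℚ)^k * β M) else 0 := by
          intro M _
          split_ifs with hq
          · push_cast; ring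
          · simp
        rw [Finset.sum_congr rfl c1,
          Finset.sum_ite_eq' (Finset.Icc h n) (n-k) (fun M => (-1 : RatFunc ℚ)^k * β M)]
        rw [if_pos (show n-k ∈ Finset.Icc h n from by rw [Finset.mem_Icc]; omega)]
      -- assemble
      rw [hT1, hzero, Finset.sum_congr rfl hIH, Finset.sum_add_distrib, hT2a, hT2b,
        hR1, hR2, hNK]
      have main : (∑ M ∈ Finset.Icc h n,
            (((if h+1 ≤ M then ((n-M-k).choose k : ℤ) else 0) : ℤ) : RatFunc ℚ) * β M)
          - (∑ M ∈ Finset.Icc h n,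
            (((if M+1 ≤ n then ((n-(M+1)-k).choose k : ℤ) else 0) : ℤ) : RatFunc ℚ) * β M)
          + (∑ M ∈ Finset.Icc h n,
            (((if h+2 ≤ M ∧ M ≤ n-k then
                ∑ m ∈ Finset.Icc (max (h+1) (M-k)) (min (M-1) (n-2*k)),
                  (-1:ℤ)^(k+m-M+k) * ((n-k-M).choose (k+m-M) : ℤ)
              else 0) : ℤ) : RatFunc ℚ) * β M)
          = (∑ M ∈ Finset.Icc h n,
            (((if M = n-k then ((-1:ℤ)^k) else 0) : ℤ) : RatFunc ℚ) * β M)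
          + ∑ M ∈ Finset.Icc h n,
            (((if M ≤ k+h then (-1:ℤ)^(k+h-M+k+1) * ((n-k-1-M).choose (k+h-M) : ℤ)
              else 0) : ℤ) : RatFunc ℚ) * β M := by
        rw [← Finset.sum_sub_distrib, ← Finset.sum_add_distrib, ← Finset.sum_add_distrib]
        apply Finset.sum_congr rfl
        intro M hM
        rw [Finset.mem_Icc] at hM
        have key := INT k h n M hk hh hn' hM.1 hM.2
        calc (((if h+1 ≤ M then ((n-M-k).choose k : ℤ) else 0) : ℤ) : RatFunc ℚ) * β M
              - (((if M+1 ≤ n then ((n-(M+1)-k).choose k : ℤ) else 0) : ℤ) : RatFunc ℚ) * β M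
              + (((if h+2 ≤ M ∧ M ≤ n-k then
                  ∑ m ∈ Finset.Icc (max (h+1) (M-k)) (min (M-1) (n-2*k)),
                    (-1:ℤ)^(k+m-M+k) * ((n-k-M).choose (k+m-M) : ℤ)
                else 0) : ℤ) : RatFunc ℚ) * β M
            = ((((if h+1 ≤ M then ((n-M-k).choose k : ℤ) else 0)
                - (if M+1 ≤ n then ((n-(M+1)-k).choose k : ℤ) else 0)
                + (if h+2 ≤ M ∧ M ≤ n-k then
                    ∑ m ∈ Finset.Icc (max (h+1) (M-k)) (min (M-1) (n-2*k)),
                      (-1:ℤ)^(k+m-M+k) * ((n-k-M).choose (k+m-M) : ℤ)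
                  else 0)) : ℤ) : RatFunc ℚ) * β M := by push_cast; ring
          _ = ((((if M = n-k then ((-1:ℤ)^k) else 0)
                + (if M ≤ k+h then (-1:ℤ)^(k+h-M+k+1) * ((n-k-1-M).choose (k+h-M) : ℤ)
                  else 0)) : ℤ) : RatFunc ℚ) * β M := by rw [key]
          _ = (((if M = n-k then ((-1:ℤ)^k) else 0) : ℤ) : RatFunc ℚ) * β M
              + (((if M ≤ k+h then (-1:ℤ)^(k+h-M+k+1) * ((n-k-1-M).choose (k+h-M) : ℤ)
                else 0) : ℤ) : RatFunc ℚ) * β M := by push_cast; ring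
      linear_combination main

/-- Γ(2,n;k) = Σ_{s=0}^{k-1} (-1)^{s+k+1} C(n-2k-1+s, s) b_{n-k+s+1}
             + Σ_{r=0}^{k-1} (-1)^{r+k} C(n-2k-1+r, r) b_{k-r+1}. -/
theorem stmt4 (n k : ℕ) (hk : 1 ≤ k) (hn : 2 * k + 1 ≤ n) :
    Gam 2 n k =
      (∑ s ∈ Finset.range k, (-1 : RatFunc ℚ) ^ (s + k + 1) *
          (Nat.choose (n - 2 * k - 1 + s) s : RatFunc ℚ) * bRF ((n : ℤ) - k + s + 1))
      + ∑ r ∈ Finset.range k, (-1 : RatFunc ℚ) ^ (r + k) *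
          (Nat.choose (n - 2 * k - 1 + r) r : RatFunc ℚ) * bRF ((k : ℤ) - r + 1) := by
  have hL : Gam 2 n k = ∑ j ∈ Jset 2 n k, ∑ s : Fin k,
      ((fun M : ℕ => bRF (M:ℤ)) (j s : ℕ) - (fun M : ℕ => bRF (M:ℤ)) ((j s : ℕ) - 1)) := by
    rw [Gam]
    apply Finset.sum_congr rfl
    intro j hj
    rw [mem_Jset] at hj
    rw [Finset.mul_sum]
    apply Finset.sum_congr rfl
    intro s _
    have hjs : 2 < (j s : ℕ) := (hj.1 s).1
    have hb := bdiff (j s : ℕ) (by omega)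
    simp only
    rw [show ((((j s : ℕ) - 1 : ℕ)) : ℤ) = (((j s : ℕ)) : ℤ) - 1 from by omega]
    exact hb.symm
  rw [hL, master (fun M : ℕ => bRF (M:ℤ)) k 2 n (by norm_num) (by omega)]
  congr 1
  · apply Finset.sum_congr rfl
    intro s hs
    rw [Finset.mem_range] at hs
    rw [show n+1-(2*k+2)+s = n-2*k-1+s from by omega,
      show ((((n-k+s+1 : ℕ))) : ℤ) = (n:ℤ)-k+s+1 from by omega]
  · apply Finset.sum_congr rfl
    intro r hr
    rw [Finset.mem_range] at hr
    rw [show n+1-(2*k+2)+r = n-2*k-1+r from by omega,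
      show ((((k+2-1-r : ℕ))) : ℤ) = (k:ℤ)-r+1 from by omega]
end
end

section
/- With S_h = (1/(1-q^2)) binom{n}{h}_{q^4} ∏_{j=1}^{n-h-1}(1+q^{4j-1}) ∏_{r=1}^{h-1}(1+q^{4r-1})(q+1)^2 for h>0, and C_m, b_m as defined, one has the identity C_{2h+1} b_{k-h} + C_{2h} b_{n-k-h+1} = S_h (q^{4h} - q^{4(n-h)})(q^{2n-2k} + q^{2k-2n-1}) for 0 < h < k ≤ n. -/
noncomputable section

open RatFunc Finset

/-- The Gaussian binomial coefficient binom{n}{h} in the variable q⁴: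
∏_{i=0}^{h-1} (1 - (q⁴)^{n-i}) / (1 - (q⁴)^{i+1}). -/
def gb (n h : ℕ) : RatFunc ℚ :=
  (∏ i ∈ Finset.range h, (1 - (X : RatFunc ℚ) ^ (4 * ((n : ℤ) - i)))) /
    ∏ i ∈ Finset.range h, (1 - (X : RatFunc ℚ) ^ (4 * ((i : ℤ) + 1)))

/-- c_m = (1-q^{2m})/(1-q^2) · q^{1-2n} (1 + q^{4n-2m+1}). -/
def cRF (n m : ℕ) : RatFunc ℚ :=
  (1 - (X : RatFunc ℚ) ^ (2 * (m : ℤ))) / (1 - X ^ (2 : ℤ)) * X ^ (1 - 2 * (n : ℤ)) *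
    (1 + X ^ (4 * (n : ℤ) - 2 * m + 1))

/-- C_{2h+1} = binom{n}{h}_{q⁴} ∏_{j=1}^{h}(1+q^{4j-1}) ∏_{r=1}^{n-h-1}(1+q^{4r-1}) q^{2(n-h)-1}(q+1),
    C_{2k}   = binom{n}{k}_{q⁴} ∏_{j=1}^{n-k}(1+q^{4j-1}) ∏_{r=1}^{k-1}(1+q^{4r-1}) q^{2k-1}(q+1). -/
def CB (n m : ℕ) : RatFunc ℚ :=
  if m % 2 = 0 then
    gb n (m / 2) * (∏ j ∈ Finset.Icc 1 (n - m / 2), (1 + (X : RatFunc ℚ) ^ (4 * (j : ℤ) - 1))) *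
      (∏ r ∈ Finset.Icc 1 (m / 2 - 1), (1 + (X : RatFunc ℚ) ^ (4 * (r : ℤ) - 1))) *
      X ^ (2 * ((m / 2 : ℕ) : ℤ) - 1) * (X + 1)
  else
    gb n (m / 2) * (∏ j ∈ Finset.Icc 1 (m / 2), (1 + (X : RatFunc ℚ) ^ (4 * (j : ℤ) - 1))) *
      (∏ r ∈ Finset.Icc 1 (n - m / 2 - 1), (1 + (X : RatFunc ℚ) ^ (4 * (r : ℤ) - 1))) *
      X ^ (2 * ((n : ℤ) - (m / 2 : ℕ)) - 1) * (X + 1)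


/-! After clearing the common factor `gb n h ∏_{j<h}(1+q^{4j-1}) ∏_{r<n-h}(1+q^{4r-1}) (q+1)/(1-q²)`,
the identity reduces to a Laurent-polynomial identity in `q`, `q^h`, `q^k`, `q^n`: both sides equal
`(q+1)(q^{4h+2n-2k} + q^{4h-2n+2k-1} - q^{2n+2k-4h-1} - q^{6n-4h-2k})`. -/

lemma Finset.prod_Icc_one_eq_prod_mul {M : Type*} [CommMonoid M] (f : ℕ → M) {m : ℕ} (hm : 0 < m) :
    ∏ j ∈ Icc 1 m, f j = (∏ j ∈ Icc 1 (m - 1), f j) * f m := by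
  obtain ⟨m, rfl⟩ := Nat.exists_eq_add_one_of_ne_zero hm.ne'
  exact Finset.prod_Icc_succ_top (by omega) f

lemma zpow_laurent_identity {K : Type*} [Field K] {x : K} (hx : x ≠ 0) (N M H : ℤ) :
    (1 + x ^ (4 * H - 1)) * x ^ (2 * (N - H) - 1) * ((x + 1) * x ^ (2 - 2 * (M - H)) *
        (1 - x ^ (4 * (M - H) - 2))) +
      (1 + x ^ (4 * (N - H) - 1)) * x ^ (2 * H - 1) * ((x + 1) * x ^ (2 - 2 * (N - M - H + 1)) *
        (1 - x ^ (4 * (N - M - H + 1) - 2))) =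
      (x + 1) * (x ^ (4 * H) - x ^ (4 * (N - H))) * (x ^ (2 * N - 2 * M) + x ^ (2 * M - 2 * N - 1)) := by
  ring_nf
  simp only [zpow_add₀ hx, zpow_sub₀ hx, zpow_neg, zpow_mul, zpow_ofNat]
  field_simp
  ring

lemma CB_two_mul_add_one (n : ℕ) {h : ℕ} (hh : 0 < h) :
    CB n (2 * h + 1) = gb n h *
      (∏ r ∈ Icc 1 (h - 1), (1 + (X : RatFunc ℚ) ^ (4 * (r : ℤ) - 1))) *
      (∏ j ∈ Icc 1 (n - h - 1), (1 + (X : RatFunc ℚ) ^ (4 * (j : ℤ) - 1))) *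
      ((1 + X ^ (4 * (h : ℤ) - 1)) * X ^ (2 * ((n : ℤ) - h) - 1) * (X + 1)) := by
  rw [CB, if_neg (by omega), show (2 * h + 1) / 2 = h by omega,
    Finset.prod_Icc_one_eq_prod_mul _ hh]
  ring

lemma CB_two_mul {n h : ℕ} (hhn : h < n) :
    CB n (2 * h) = gb n h *
      (∏ r ∈ Icc 1 (h - 1), (1 + (X : RatFunc ℚ) ^ (4 * (r : ℤ) - 1))) *
      (∏ j ∈ Icc 1 (n - h - 1), (1 + (X : RatFunc ℚ) ^ (4 * (j : ℤ) - 1))) *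
      ((1 + X ^ (4 * ((n : ℤ) - h) - 1)) * X ^ (2 * (h : ℤ) - 1) * (X + 1)) := by
  rw [CB, if_pos (by omega), show 2 * h / 2 = h by omega,
    Finset.prod_Icc_one_eq_prod_mul _ (Nat.sub_pos_of_lt hhn), Nat.cast_sub hhn.le]
  ring

/-- C_{2h+1} b_{k-h} + C_{2h} b_{n-k-h+1} = S_h (q^{4h} - q^{4(n-h)})(q^{2n-2k} + q^{2k-2n-1}),
where S_h = (1/(1-q²)) binom{n}{h}_{q⁴} ∏_{j=1}^{n-h-1}(1+q^{4j-1}) ∏_{r=1}^{h-1}(1+q^{4r-1}) (q+1)². -/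
theorem stmt7 (n k h : ℕ) (h1 : 0 < h) (h2 : h < k) (h3 : k ≤ n) :
    CB n (2 * h + 1) * bRF ((k : ℤ) - h) + CB n (2 * h) * bRF ((n : ℤ) - k - h + 1) =
      (1 / (1 - (X : RatFunc ℚ) ^ (2 : ℤ)) * gb n h *
          (∏ j ∈ Finset.Icc 1 (n - h - 1), (1 + (X : RatFunc ℚ) ^ (4 * (j : ℤ) - 1))) *
          (∏ r ∈ Finset.Icc 1 (h - 1), (1 + (X : RatFunc ℚ) ^ (4 * (r : ℤ) - 1))) * (X + 1) ^ 2) *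
        ((X : RatFunc ℚ) ^ (4 * (h : ℤ)) - X ^ (4 * ((n : ℤ) - h))) *
        ((X : RatFunc ℚ) ^ (2 * (n : ℤ) - 2 * k) + X ^ (2 * (k : ℤ) - 2 * n - 1)) := by
  rw [CB_two_mul_add_one n h1, CB_two_mul (h2.trans_le h3), bRF, bRF]
  linear_combination gb n h *
      (∏ r ∈ Icc 1 (h - 1), (1 + (X : RatFunc ℚ) ^ (4 * (r : ℤ) - 1))) *
      (∏ j ∈ Icc 1 (n - h - 1), (1 + (X : RatFunc ℚ) ^ (4 * (j : ℤ) - 1))) *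
      (X + 1) / (1 - (X : RatFunc ℚ) ^ (2 : ℤ)) * zpow_laurent_identity (RatFunc.X_ne_zero (K := ℚ)) n k h
end
end

section
/- With C_{2k} and C_{2k-2} given by the formula C_{2j} = binom{n}{j}_{q^4} ∏_{i=1}^{n-j}(1+q^{4i-1}) ∏_{r=1}^{j-1}(1+q^{4r-1}) q^{2j-1}(q+1), and P_{k-1} = S_{k-1}(q^{4(k-1)} - q^{4(n-k+1)}) where S_{k-1} = (1/(1-q^2)) binom{n}{k-1}_{q^4} ∏_{j=1}^{n-k}(1+q^{4j-1}) ∏_{r=1}^{k-2}(1+q^{4r-1})(q+1)^2, the identity C_{2k}(1-q^{4k}) q^{2-2k} = (1-q^2) P_{k-1} + C_{2k-2}(1-q^{4k-4}) q^{4-2k} holds. -/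
noncomputable section

open RatFunc Finset

lemma one_sub_pow_ne (m : ℕ) (h : 0 < m) : (1:RatFunc ℚ) - (X : RatFunc ℚ) ^ (m:ℤ) ≠ 0 := by
  rw [zpow_natCast, sub_ne_zero]
  intro he
  have h2 : (algebraMap (Polynomial ℚ) (RatFunc ℚ)) 1 =
      algebraMap (Polynomial ℚ) (RatFunc ℚ) (Polynomial.X ^ m) := by
    simpa [map_pow, RatFunc.algebraMap_X] using he
  have h3 := RatFunc.algebraMap_injective ℚ h2
  have h4 := congrArg Polynomial.natDegree h3
  simp [Polynomial.natDegree_X_pow] at h4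
  omega

set_option maxHeartbeats 1000000 in
/-- C_{2k}(1-q^{4k}) q^{2-2k} = (1-q²) P_{k-1} + C_{2k-2}(1-q^{4k-4}) q^{4-2k}, where
P_{k-1} = S_{k-1}(q^{4(k-1)} - q^{4(n-k+1)}) and
S_{k-1} = (1/(1-q²)) binom{n}{k-1}_{q⁴} ∏_{j=1}^{n-k}(1+q^{4j-1}) ∏_{r=1}^{k-2}(1+q^{4r-1}) (q+1)². -/
theorem stmt8 (n k : ℕ) (h1 : 2 ≤ k) (h2 : k ≤ n) :
    CB n (2 * k) * (1 - (X : RatFunc ℚ) ^ (4 * (k : ℤ))) * X ^ (2 - 2 * (k : ℤ)) =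
      (1 - (X : RatFunc ℚ) ^ (2 : ℤ)) *
        ((1 / (1 - (X : RatFunc ℚ) ^ (2 : ℤ)) * gb n (k - 1) *
            (∏ j ∈ Finset.Icc 1 (n - k), (1 + (X : RatFunc ℚ) ^ (4 * (j : ℤ) - 1))) *
            (∏ r ∈ Finset.Icc 1 (k - 2), (1 + (X : RatFunc ℚ) ^ (4 * (r : ℤ) - 1))) * (X + 1) ^ 2) *
          ((X : RatFunc ℚ) ^ (4 * ((k : ℤ) - 1)) - X ^ (4 * ((n : ℤ) - k + 1))))
      + CB n (2 * k - 2) * (1 - (X : RatFunc ℚ) ^ (4 * (k : ℤ) - 4)) * X ^ (4 - 2 * (k : ℤ)) := by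
  have hX : (X : RatFunc ℚ) ≠ 0 := RatFunc.X_ne_zero
  have hgb : gb n k = gb n (k-1) * ((1 - (X:RatFunc ℚ) ^ (4*((n:ℤ) - (k:ℤ) + 1))) /
      (1 - (X:RatFunc ℚ) ^ (4*(k:ℤ)))) := by
    have hk : k = (k-1) + 1 := by omega
    rw [gb, gb, div_mul_div_comm]
    conv_lhs => rw [hk, Finset.prod_range_succ, Finset.prod_range_succ]
    rw [show ((k-1:ℕ):ℤ) = (k:ℤ)-1 from by omega,
      show (4*((n:ℤ)-((k:ℤ)-1))) = 4*((n:ℤ)-(k:ℤ)+1) from by ring,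
      show (4*(((k:ℤ)-1)+1)) = 4*(k:ℤ) from by ring]
  have hp1 : (∏ r ∈ Finset.Icc 1 (k-1), (1 + (X:RatFunc ℚ) ^ (4 * (r : ℤ) - 1))) =
      (∏ r ∈ Finset.Icc 1 (k-2), (1 + (X:RatFunc ℚ) ^ (4 * (r : ℤ) - 1))) *
      (1 + (X:RatFunc ℚ) ^ (4*(k:ℤ) - 5)) := by
    rw [show k-1 = (k-2)+1 from by omega, Finset.prod_Icc_succ_top (by omega),
      show ((k-2+1:ℕ):ℤ) = (k:ℤ)-1 from by omega,
      show (4*((k:ℤ)-1)-1) = 4*(k:ℤ)-5 from by ring]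
  have hp2 : (∏ j ∈ Finset.Icc 1 (n-(k-1)), (1 + (X:RatFunc ℚ) ^ (4 * (j : ℤ) - 1))) =
      (∏ j ∈ Finset.Icc 1 (n-k), (1 + (X:RatFunc ℚ) ^ (4 * (j : ℤ) - 1))) *
      (1 + (X:RatFunc ℚ) ^ (4*(n:ℤ) - 4*(k:ℤ) + 3)) := by
    rw [show n-(k-1) = (n-k)+1 from by omega, Finset.prod_Icc_succ_top (by omega),
      show ((n-k+1:ℕ):ℤ) = (n:ℤ)-(k:ℤ)+1 from by omega,
      show (4*((n:ℤ)-(k:ℤ)+1)-1) = 4*(n:ℤ)-4*(k:ℤ)+3 from by ring]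
  have hm1 : (2*k) % 2 = 0 := by omega
  have hd1 : (2*k) / 2 = k := by omega
  have hm2 : (2*k-2) % 2 = 0 := by omega
  have hd2 : (2*k-2) / 2 = k-1 := by omega
  have hd3 : k - 1 - 1 = k - 2 := by omega
  have hc1 : ((k-1:ℕ):ℤ) = (k:ℤ)-1 := by omega
  have h2ne : (1:RatFunc ℚ) - X^(2:ℤ) ≠ 0 := by
    exact_mod_cast one_sub_pow_ne 2 (by norm_num)
  have hvraw : (1:RatFunc ℚ) - X^(4*(k:ℤ)) ≠ 0 := by
    have := one_sub_pow_ne (4*k) (by omega)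
    rwa [show (((4*k:ℕ)):ℤ) = 4*(k:ℤ) from by omega] at this
  simp only [CB, hm1, hm2, hd1, hd2, hd3, hc1, if_true, eq_self_iff_true]
  rw [hp1, hp2, one_div]
  have xp : ∀ c0 cb cg : ℕ, (X:RatFunc ℚ) ^ ((c0:ℤ) + (cb:ℤ)*((k:ℤ)-2) + (cg:ℤ)*((n:ℤ)-(k:ℤ))) =
      X ^ c0 * ((X:RatFunc ℚ) ^ ((k:ℤ)-2)) ^ cb * ((X:RatFunc ℚ) ^ ((n:ℤ)-(k:ℤ))) ^ cg := by
    intro c0 cb cg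
    rw [zpow_add₀ hX, zpow_add₀ hX, mul_comm ((cb:ℤ)), mul_comm ((cg:ℤ)), zpow_mul, zpow_mul,
      zpow_natCast, zpow_natCast, zpow_natCast]
  have E1 : (X:RatFunc ℚ)^(4*((n:ℤ)-(k:ℤ)+1)) = X^(4:ℕ) * ((X:RatFunc ℚ)^((k:ℤ)-2))^(0:ℕ) * ((X:RatFunc ℚ)^((n:ℤ)-(k:ℤ)))^(4:ℕ) := by
    rw [show (4*((n:ℤ)-(k:ℤ)+1)) = ((4:ℕ):ℤ) + ((0:ℕ):ℤ)*((k:ℤ)-2) + ((4:ℕ):ℤ)*((n:ℤ)-(k:ℤ)) from by push_cast; ring]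
    exact xp 4 0 4
  have E2 : (X:RatFunc ℚ)^(4*(k:ℤ)) = X^(8:ℕ) * ((X:RatFunc ℚ)^((k:ℤ)-2))^(4:ℕ) * ((X:RatFunc ℚ)^((n:ℤ)-(k:ℤ)))^(0:ℕ) := by
    rw [show (4*(k:ℤ)) = ((8:ℕ):ℤ) + ((4:ℕ):ℤ)*((k:ℤ)-2) + ((0:ℕ):ℤ)*((n:ℤ)-(k:ℤ)) from by push_cast; ring]
    exact xp 8 4 0
  have E3 : (X:RatFunc ℚ)^(4*(k:ℤ)-5) = X^(3:ℕ) * ((X:RatFunc ℚ)^((k:ℤ)-2))^(4:ℕ) * ((X:RatFunc ℚ)^((n:ℤ)-(k:ℤ)))^(0:ℕ) := by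
    rw [show (4*(k:ℤ)-5) = ((3:ℕ):ℤ) + ((4:ℕ):ℤ)*((k:ℤ)-2) + ((0:ℕ):ℤ)*((n:ℤ)-(k:ℤ)) from by push_cast; ring]
    exact xp 3 4 0
  have E4 : (X:RatFunc ℚ)^(2*(k:ℤ)-1) = X^(3:ℕ) * ((X:RatFunc ℚ)^((k:ℤ)-2))^(2:ℕ) * ((X:RatFunc ℚ)^((n:ℤ)-(k:ℤ)))^(0:ℕ) := by
    rw [show (2*(k:ℤ)-1) = ((3:ℕ):ℤ) + ((2:ℕ):ℤ)*((k:ℤ)-2) + ((0:ℕ):ℤ)*((n:ℤ)-(k:ℤ)) from by push_cast; ring]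
    exact xp 3 2 0
  have E5 : (X:RatFunc ℚ)^(2-2*(k:ℤ)) = ((X:RatFunc ℚ)^(2*(k:ℤ)-2))⁻¹ := by
    rw [show (2-2*(k:ℤ)) = -(2*(k:ℤ)-2) from by ring, zpow_neg]
  have E6 : (X:RatFunc ℚ)^(4*((k:ℤ)-1)) = X^(4:ℕ) * ((X:RatFunc ℚ)^((k:ℤ)-2))^(4:ℕ) * ((X:RatFunc ℚ)^((n:ℤ)-(k:ℤ)))^(0:ℕ) := by
    rw [show (4*((k:ℤ)-1)) = ((4:ℕ):ℤ) + ((4:ℕ):ℤ)*((k:ℤ)-2) + ((0:ℕ):ℤ)*((n:ℤ)-(k:ℤ)) from by push_cast; ring]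
    exact xp 4 4 0
  have E7 : (X:RatFunc ℚ)^(4*(n:ℤ)-4*(k:ℤ)+3) = X^(3:ℕ) * ((X:RatFunc ℚ)^((k:ℤ)-2))^(0:ℕ) * ((X:RatFunc ℚ)^((n:ℤ)-(k:ℤ)))^(4:ℕ) := by
    rw [show (4*(n:ℤ)-4*(k:ℤ)+3) = ((3:ℕ):ℤ) + ((0:ℕ):ℤ)*((k:ℤ)-2) + ((4:ℕ):ℤ)*((n:ℤ)-(k:ℤ)) from by push_cast; ring]
    exact xp 3 0 4
  have E8 : (X:RatFunc ℚ)^(2*((k:ℤ)-1)-1) = X^(1:ℕ) * ((X:RatFunc ℚ)^((k:ℤ)-2))^(2:ℕ) * ((X:RatFunc ℚ)^((n:ℤ)-(k:ℤ)))^(0:ℕ) := by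
    rw [show (2*((k:ℤ)-1)-1) = ((1:ℕ):ℤ) + ((2:ℕ):ℤ)*((k:ℤ)-2) + ((0:ℕ):ℤ)*((n:ℤ)-(k:ℤ)) from by push_cast; ring]
    exact xp 1 2 0
  have E9 : (X:RatFunc ℚ)^(4*(k:ℤ)-4) = X^(4:ℕ) * ((X:RatFunc ℚ)^((k:ℤ)-2))^(4:ℕ) * ((X:RatFunc ℚ)^((n:ℤ)-(k:ℤ)))^(0:ℕ) := by
    rw [show (4*(k:ℤ)-4) = ((4:ℕ):ℤ) + ((4:ℕ):ℤ)*((k:ℤ)-2) + ((0:ℕ):ℤ)*((n:ℤ)-(k:ℤ)) from by push_cast; ring]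
    exact xp 4 4 0
  have E10 : (X:RatFunc ℚ)^(4-2*(k:ℤ)) = X^(2:ℕ) * ((X:RatFunc ℚ)^(2*(k:ℤ)-2))⁻¹ := by
    rw [show (4-2*(k:ℤ)) = ((2:ℕ):ℤ) + -(2*(k:ℤ)-2) from by push_cast; ring, zpow_add₀ hX, zpow_neg]
    norm_cast
  have E11 : (X:RatFunc ℚ)^(2:ℤ) = X^(2:ℕ) := by norm_cast
  have hgbm : gb n k * (1 - (X:RatFunc ℚ)^(4*(k:ℤ))) =
      gb n (k-1) * (1 - (X:RatFunc ℚ)^(4*((n:ℤ)-(k:ℤ)+1))) := by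
    rw [hgb, mul_assoc, div_mul_cancel₀ _ hvraw]
  rw [E1, E2] at hgbm
  rw [E3, E4, E2, E5, E11, E6, E1, E7, E8, E9, E10]
  rw [E11] at h2ne
  have hr2 : (X:RatFunc ℚ)^(2:ℕ) * ((X:RatFunc ℚ)^((k:ℤ)-2))^(2:ℕ) * ((X:RatFunc ℚ)^(2*(k:ℤ)-2))⁻¹ = 1 := by
    have hw : (X:RatFunc ℚ)^(2*(k:ℤ)-2) = X^(2:ℕ) * ((X:RatFunc ℚ)^((k:ℤ)-2))^(2:ℕ) := by
      rw [show (2*(k:ℤ)-2) = ((2:ℕ):ℤ) + ((2:ℕ):ℤ)*((k:ℤ)-2) + ((0:ℕ):ℤ)*((n:ℤ)-(k:ℤ)) from by push_cast; ring,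
        xp 2 2 0, pow_zero, mul_one]
    rw [← hw]
    exact mul_inv_cancel₀ (zpow_ne_zero _ hX)
  have hv2 : ((1:RatFunc ℚ) - X^(2:ℕ)) * ((1:RatFunc ℚ) - X^(2:ℕ))⁻¹ = 1 := mul_inv_cancel₀ h2ne
  set G := gb n (k-1) with hG
  set g := gb n k with hg
  set P := (∏ j ∈ Finset.Icc 1 (n - k), (1 + (X:RatFunc ℚ) ^ (4 * (j : ℤ) - 1))) with hP
  set Q := (∏ r ∈ Finset.Icc 1 (k - 2), (1 + (X:RatFunc ℚ) ^ (4 * (r : ℤ) - 1))) with hQ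
  set a := (X:RatFunc ℚ) ^ ((k:ℤ)-2) with haa
  set c := (X:RatFunc ℚ) ^ ((n:ℤ)-(k:ℤ)) with hcc
  set w2 := ((X:RatFunc ℚ)^(2*(k:ℤ)-2))⁻¹ with hw2
  try clear_value G g P Q a c w2
  linear_combination (P * Q * (1 + X^(3:ℕ)*a^(4:ℕ)) * (X^(3:ℕ)*a^(2:ℕ)) * (X+1) * w2) * hgbm
    - (G*P*Q*(X+1)^2*X^(4:ℕ)*(a^(4:ℕ) - c^(4:ℕ))) * hv2
    + (G*P*Q*(X+1)^2*X^(4:ℕ)*(a^(4:ℕ) - c^(4:ℕ))) * hr2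
end
end

section
/- With C_{2k+1} = binom{n}{k}_{q^4} ∏_{j=1}^k(1+q^{4j-1}) ∏_{r=1}^{n-k-1}(1+q^{4r-1}) q^{2(n-k)-1}(q+1), C_{2k} as above, and c_{2k+1} = (1-q^{4k+2})/(1-q^2) · q^{-2n+1}(1+q^{4n-4k-1}), the identity C_{2k+1} c_{2k+1} (1-q^2) = C_{2k}(q^{4k}+q)(q^{-4k}-q^2) holds. -/
noncomputable section

open RatFunc Finset

lemma prodsplit (f : ℕ → RatFunc ℚ) (m : ℕ) (hm : 1 ≤ m) :
    ∏ j ∈ Finset.Icc 1 m, f j = (∏ j ∈ Finset.Icc 1 (m - 1), f j) * f m := by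
  obtain ⟨m', rfl⟩ : ∃ m', m = m' + 1 := ⟨m - 1, by omega⟩
  rw [Finset.prod_Icc_succ_top (by omega : 1 ≤ m' + 1)]
  simp


set_option maxHeartbeats 2000000 in
/-- C_{2k+1} c_{2k+1} (1-q²) = C_{2k} (q^{4k}+q)(q^{-4k}-q²). -/
theorem stmt9 (n k : ℕ) (h1 : 1 ≤ k) (h2 : k < n) :
    CB n (2 * k + 1) * cRF n (2 * k + 1) * (1 - (X : RatFunc ℚ) ^ (2 : ℤ)) =
      CB n (2 * k) * ((X : RatFunc ℚ) ^ (4 * (k : ℤ)) + X) *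
        ((X : RatFunc ℚ) ^ (-(4 * (k : ℤ))) - X ^ (2 : ℤ)) := by
  have hX : (X : RatFunc ℚ) ≠ 0 := RatFunc.X_ne_zero
  have hden : (1 : RatFunc ℚ) - X ^ (2:ℤ) ≠ 0 := by
    rw [zpow_two, sub_ne_zero]
    intro h
    rw [← RatFunc.algebraMap_X, ← map_mul, ← map_one (algebraMap (Polynomial ℚ) (RatFunc ℚ))] at h
    have h2 := RatFunc.algebraMap_injective ℚ h.symm
    have := congrArg (Polynomial.eval 0) h2
    simp at this
  have e1 : (2 * k + 1) / 2 = k := by omega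
  have e2 : (2 * k + 1) % 2 = 1 := by omega
  have e3 : (2 * k) / 2 = k := by omega
  have e4 : (2 * k) % 2 = 0 := by omega
  rw [CB, CB, e1, e2, e3, e4]
  simp only [if_neg (by omega : ¬ (1 : ℕ) = 0), if_pos rfl]
  rw [prodsplit _ k h1, prodsplit _ (n - k) (by omega)]
  rw [cRF]
  have ck : ((n - k : ℕ) : ℤ) = (n : ℤ) - k := by omega
  rw [ck]
  push_cast
  set G := gb n k
  set P1 := ∏ r ∈ Finset.Icc 1 (k - 1), (1 + (X : RatFunc ℚ) ^ (4 * (r : ℤ) - 1))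
  set P2 := ∏ r ∈ Finset.Icc 1 (n - k - 1), (1 + (X : RatFunc ℚ) ^ (4 * (r : ℤ) - 1))
  have hY : (X : RatFunc ℚ) ^ (k:ℤ) ≠ 0 := zpow_ne_zero _ hX
  have hZ : (X : RatFunc ℚ) ^ (n:ℤ) ≠ 0 := zpow_ne_zero _ hX
  have Bk2 : (X : RatFunc ℚ) ^ ((k:ℤ) * 2) = ((X : RatFunc ℚ) ^ (k:ℤ)) ^ (2:ℕ) := by
    rw [zpow_mul]; norm_cast
  have Bk4 : (X : RatFunc ℚ) ^ ((k:ℤ) * 4) = ((X : RatFunc ℚ) ^ (k:ℤ)) ^ (4:ℕ) := by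
    rw [zpow_mul]; norm_cast
  have Bn2 : (X : RatFunc ℚ) ^ ((n:ℤ) * 2) = ((X : RatFunc ℚ) ^ (n:ℤ)) ^ (2:ℕ) := by
    rw [zpow_mul]; norm_cast
  have Bn4 : (X : RatFunc ℚ) ^ ((n:ℤ) * 4) = ((X : RatFunc ℚ) ^ (n:ℤ)) ^ (4:ℕ) := by
    rw [zpow_mul]; norm_cast
  have A1 : (X : RatFunc ℚ) ^ (4 * (k:ℤ) - 1) = ((X : RatFunc ℚ) ^ (k:ℤ)) ^ (4:ℕ) / X := by
    rw [show (4 * (k:ℤ) - 1) = (k:ℤ) * 4 - 1 by ring, zpow_sub₀ hX, Bk4, zpow_one]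
  have A2 : (X : RatFunc ℚ) ^ (2 * ((n:ℤ) - (k:ℤ)) - 1)
      = ((X : RatFunc ℚ) ^ (n:ℤ)) ^ (2:ℕ) / (((X : RatFunc ℚ) ^ (k:ℤ)) ^ (2:ℕ) * X) := by
    rw [show (2 * ((n:ℤ) - (k:ℤ)) - 1) = (n:ℤ) * 2 - ((k:ℤ) * 2 + 1) by ring,
      zpow_sub₀ hX, zpow_add₀ hX, Bn2, Bk2, zpow_one]
  have A3 : (X : RatFunc ℚ) ^ (2 * (2 * (k:ℤ) + 1)) = ((X : RatFunc ℚ) ^ (k:ℤ)) ^ (4:ℕ) * (X * X) := by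
    rw [show (2 * (2 * (k:ℤ) + 1)) = (k:ℤ) * 4 + 2 by ring, zpow_add₀ hX, Bk4, zpow_two]
  have A4 : (X : RatFunc ℚ) ^ (1 - 2 * (n:ℤ)) = X / ((X : RatFunc ℚ) ^ (n:ℤ)) ^ (2:ℕ) := by
    rw [show (1 - 2 * (n:ℤ)) = 1 - (n:ℤ) * 2 by ring, zpow_sub₀ hX, zpow_one, Bn2]
  have A5 : (X : RatFunc ℚ) ^ (4 * (n:ℤ) - 2 * (2 * (k:ℤ) + 1) + 1)
      = ((X : RatFunc ℚ) ^ (n:ℤ)) ^ (4:ℕ) / (((X : RatFunc ℚ) ^ (k:ℤ)) ^ (4:ℕ) * X) := by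
    rw [show (4 * (n:ℤ) - 2 * (2 * (k:ℤ) + 1) + 1) = (n:ℤ) * 4 - ((k:ℤ) * 4 + 1) by ring,
      zpow_sub₀ hX, zpow_add₀ hX, Bn4, Bk4, zpow_one]
  have A6 : (X : RatFunc ℚ) ^ (4 * ((n:ℤ) - (k:ℤ)) - 1)
      = ((X : RatFunc ℚ) ^ (n:ℤ)) ^ (4:ℕ) / (((X : RatFunc ℚ) ^ (k:ℤ)) ^ (4:ℕ) * X) := by
    rw [show (4 * ((n:ℤ) - (k:ℤ)) - 1) = (n:ℤ) * 4 - ((k:ℤ) * 4 + 1) by ring,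
      zpow_sub₀ hX, zpow_add₀ hX, Bn4, Bk4, zpow_one]
  have A7 : (X : RatFunc ℚ) ^ (2 * (k:ℤ) - 1) = ((X : RatFunc ℚ) ^ (k:ℤ)) ^ (2:ℕ) / X := by
    rw [show (2 * (k:ℤ) - 1) = (k:ℤ) * 2 - 1 by ring, zpow_sub₀ hX, Bk2, zpow_one]
  have A8 : (X : RatFunc ℚ) ^ (4 * (k:ℤ)) = ((X : RatFunc ℚ) ^ (k:ℤ)) ^ (4:ℕ) := by
    rw [show (4 * (k:ℤ)) = (k:ℤ) * 4 by ring, Bk4]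
  have A9 : (X : RatFunc ℚ) ^ (-(4 * (k:ℤ))) = 1 / ((X : RatFunc ℚ) ^ (k:ℤ)) ^ (4:ℕ) := by
    rw [zpow_neg, A8, one_div]
  have A10 : (X : RatFunc ℚ) ^ (2:ℤ) = X * X := by rw [zpow_two]
  simp only [A1, A2, A3, A4, A5, A6, A7, A8, A9, A10]
  have hd : (1 : RatFunc ℚ) - X * X ≠ 0 := by rw [← zpow_two]; exact hden
  obtain ⟨D, hD0, hDe⟩ : ∃ D, D ≠ 0 ∧ (1 : RatFunc ℚ) - X * X = D := ⟨_, hd, rfl⟩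
  obtain ⟨Y, hY0, hYe⟩ : ∃ Y, Y ≠ 0 ∧ (X : RatFunc ℚ) ^ (k:ℤ) = Y := ⟨_, hY, rfl⟩
  obtain ⟨Z, hZ0, hZe⟩ : ∃ Z, Z ≠ 0 ∧ (X : RatFunc ℚ) ^ (n:ℤ) = Z := ⟨_, hZ, rfl⟩
  rw [hYe, hZe] at *
  rw [hDe]
  field_simp [hX, hY0, hZ0, hD0]
  ring
end
end

section
/- Define integers A_h^{k,n} by: A_h^{k,n} = 0 if h > k or h ≤ 0; A_k^{k,n} = 1; A_h^{k,n} = A_{h-1}^{k-1,n-2} for 1 < h < k; and A_1^{k,n} = Σ_{i=2}^k (-1)^i binomial(n-i-1, i-1) A_{i-1}^{k-1,n-2}. Then A_h^{k,n} = A_h^{k,n-1} + A_h^{k-1,n-1} for all 1 ≤ h ≤ k < n appropriate. -/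
open Finset

/-- The integers A_h^{k,n} (here `A k n h`): A_h^{k,n} = 0 if h > k or h = 0;
A_k^{k,n} = 1; A_h^{k,n} = A_{h-1}^{k-1,n-2} for 1 < h < k;
A_1^{k,n} = Σ_{i=2}^k (-1)^i C(n-i-1, i-1) A_{i-1}^{k-1,n-2}. -/
def A : ℕ → ℕ → ℕ → ℤ
  | 0, _, _ => 0
  | (k + 1), n, h =>
    if h = 0 ∨ k + 1 < h then 0
    else if h = k + 1 then 1
    else if h = 1 then
      ∑ i ∈ Finset.Icc 2 (k + 1),
        (-1 : ℤ) ^ i * (Nat.choose (n - i - 1) (i - 1) : ℤ) * A k (n - 2) (i - 1)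
    else A k (n - 2) (h - 1)

lemma A_gt {k h : ℕ} (n : ℕ) (hk : k < h) : A k n h = 0 := by
  cases k with
  | zero => rfl
  | succ k => simp only [A]; rw [if_pos (Or.inr hk)]

lemma A_self {k : ℕ} (n : ℕ) (hk : 1 ≤ k) : A k n k = 1 := by
  cases k with
  | zero => omega
  | succ k => simp only [A]; rw [if_neg (by omega)]; simp

lemma A_step {k h : ℕ} (n : ℕ) (h2 : 2 ≤ h) (hk : h ≤ k) :
    A k n h = A (k - 1) (n - 2) (h - 1) := by
  cases k with
  | zero => omega
  | succ k =>
    simp only [Nat.add_sub_cancel]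
    by_cases he : h = k + 1
    · subst he
      rw [A_self n (by omega), Nat.add_sub_cancel, A_self (n-2) (by omega)]
    · simp only [A]
      rw [if_neg (by omega), if_neg he, if_neg (by omega)]

lemma A_one {k : ℕ} (n : ℕ) (hk : 2 ≤ k) :
    A k n 1 = ∑ i ∈ Finset.Icc 2 k,
      (-1 : ℤ) ^ i * (Nat.choose (n - i - 1) (i - 1) : ℤ) * A (k - 1) (n - 2) (i - 1) := by
  cases k with
  | zero => omega
  | succ k =>
    simp only [Nat.add_sub_cancel, A]
    rw [if_neg (by omega), if_neg (by omega)]; simp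

lemma A_key (n k : ℕ) (hk : 2 ≤ k) :
    ∑ j ∈ Finset.Icc 1 k, (-1 : ℤ) ^ j * (Nat.choose (n - j - 1) (j - 1) : ℤ) * A k n j = 0 := by
  have hins : Finset.Icc 1 k = insert 1 (Finset.Icc 2 k) := by
    ext x; simp only [Finset.mem_Icc, Finset.mem_insert]; omega
  rw [hins, Finset.sum_insert (by simp)]
  have hrest : ∑ j ∈ Finset.Icc 2 k, (-1 : ℤ) ^ j * (Nat.choose (n - j - 1) (j - 1) : ℤ) * A k n j
      = A k n 1 := by
    rw [A_one n hk]
    refine Finset.sum_congr rfl fun j hj => ?_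
    have hj' := Finset.mem_Icc.mp hj
    rw [A_step n hj'.1 hj'.2]
  rw [hrest]
  simp

lemma A_key' (n k : ℕ) (hk : 2 ≤ k) :
    ∑ i ∈ Finset.Icc 2 (k + 1), (-1 : ℤ) ^ i * (Nat.choose (n - i) (i - 2) : ℤ) * A k n (i - 1) = 0 := by
  have hmap : Finset.Icc (2:ℕ) (k+1) = Finset.map (addLeftEmbedding 1) (Finset.Icc 1 k) := by
    rw [Finset.map_add_left_Icc]; congr 1; omega
  rw [hmap, Finset.sum_map]
  have : ∀ j ∈ Finset.Icc 1 k,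
      (-1 : ℤ) ^ (addLeftEmbedding 1 j) * (Nat.choose (n - (addLeftEmbedding 1 j)) ((addLeftEmbedding 1 j) - 2) : ℤ) * A k n ((addLeftEmbedding 1 j) - 1)
      = -((-1 : ℤ) ^ j * (Nat.choose (n - j - 1) (j - 1) : ℤ) * A k n j) := by
    intro j hj
    simp only [addLeftEmbedding_apply]
    rw [show 1 + j - 1 = j by omega, show 1 + j - 2 = j - 1 by omega,
      show n - (1 + j) = n - j - 1 by omega]
    ring
  rw [Finset.sum_congr rfl this, Finset.sum_neg_distrib, A_key n k hk, neg_zero]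

lemma A_main (k : ℕ) : ∀ n h : ℕ, 1 ≤ h → h ≤ k → 2 * k ≤ n →
    A k n h = A k (n - 1) h + A (k - 1) (n - 1) h := by
  induction k with
  | zero => intro n h hh hk _; omega
  | succ k ih =>
    intro n h hh hk hn
    by_cases hk1 : h = k + 1
    · subst hk1
      rw [A_self n (by omega), A_self (n-1) (by omega), Nat.add_sub_cancel,
        A_gt (n-1) (by omega)]
      ring
    · have hk' : h ≤ k := by omega
      by_cases h1 : h = 1
      · subst h1
        by_cases hk2 : k = 1
        · subst hk2
          rw [A_one n (by norm_num), A_one (n-1) (by norm_num)]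
          simp only [Finset.Icc_self, Finset.sum_singleton, Nat.add_sub_cancel]
          norm_num
          rw [A_self (n-2) le_rfl, A_self (n-1-2) le_rfl, A_self (n-1) le_rfl]
          simp only [mul_one]
          omega
        · have hk2' : 2 ≤ k := by omega
          rw [A_one n (by omega)]
          simp only [Nat.add_sub_cancel]
          have hsplit : ∀ i ∈ Finset.Icc 2 (k+1),
              (-1 : ℤ) ^ i * (Nat.choose (n - i - 1) (i - 1) : ℤ) * A k (n - 2) (i - 1)
              = ((-1 : ℤ) ^ i * (Nat.choose (n - 2 - i) (i - 1) : ℤ) * A k (n - 2 - 1) (i - 1)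
                + (-1 : ℤ) ^ i * (Nat.choose (n - 2 - i) (i - 1) : ℤ) * A (k - 1) (n - 2 - 1) (i - 1))
                + (-1 : ℤ) ^ i * (Nat.choose (n - 2 - i) (i - 2) : ℤ) * A k (n - 2) (i - 1) := by
            intro i hi
            have hi' := Finset.mem_Icc.mp hi
            have ePascal : Nat.choose (n - i - 1) (i - 1)
                = Nat.choose (n - 2 - i) (i - 2) + Nat.choose (n - 2 - i) (i - 1) := by
              rw [show n - i - 1 = (n - 2 - i) + 1 by omega, show i - 1 = (i - 2) + 1 by omega,
                Nat.choose_succ_succ, Nat.succ_eq_add_one, show (i - 2) + 1 = i - 1 by omega]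
            have eIH := ih (n - 2) (i - 1) (by omega) (by omega) (by omega)
            rw [ePascal]
            push_cast
            rw [eIH]
            ring
          rw [Finset.sum_congr rfl hsplit, Finset.sum_add_distrib, Finset.sum_add_distrib,
            A_key' (n - 2) k hk2', add_zero]
          have hS1 : A (k + 1) (n - 1) 1
              = ∑ i ∈ Finset.Icc 2 (k+1),
                (-1 : ℤ) ^ i * (Nat.choose (n - 2 - i) (i - 1) : ℤ) * A k (n - 2 - 1) (i - 1) := by
            rw [A_one (n-1) (by omega)]
            simp only [Nat.add_sub_cancel]
            refine Finset.sum_congr rfl fun i hi => ?_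
            have hi' := Finset.mem_Icc.mp hi
            rw [show n - 1 - i - 1 = n - 2 - i by omega, show n - 1 - 2 = n - 2 - 1 by omega]
          have hS2 : A k (n - 1) 1
              = ∑ i ∈ Finset.Icc 2 (k+1),
                (-1 : ℤ) ^ i * (Nat.choose (n - 2 - i) (i - 1) : ℤ) * A (k - 1) (n - 2 - 1) (i - 1) := by
            rw [Finset.sum_Icc_succ_top (by omega : 2 ≤ k + 1), Nat.add_sub_cancel,
              A_gt (n - 2 - 1) (by omega : k - 1 < k), mul_zero, add_zero, A_one (n-1) hk2']
            refine Finset.sum_congr rfl fun i hi => ?_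
            rw [show n - 1 - i - 1 = n - 2 - i by omega, show n - 1 - 2 = n - 2 - 1 by omega]
          rw [hS1, hS2]
      · have h2 : 2 ≤ h := by omega
        rw [A_step n h2 (by omega), A_step (n-1) h2 (by omega), Nat.add_sub_cancel,
          A_step (n-1) h2 hk', show n - 1 - 2 = n - 2 - 1 by omega]
        exact ih (n - 2) (h - 1) (by omega) (by omega) (by omega)

/-- A_h^{k,n} = A_h^{k,n-1} + A_h^{k-1,n-1} for 1 ≤ h ≤ k. -/
theorem stmt13 (n k h : ℕ) (hh : 1 ≤ h) (hk : h ≤ k) (hn : 2 * k ≤ n) :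
    A k n h = A k (n - 1) h + A (k - 1) (n - 1) h := by
  exact A_main k n h hh hk hn
end
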